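/- arXiv:2309.02475 — 7 statements merged into one kernel-verified Lean document; each statement's English description precedes it below -/
import Mathlib

section
/- Let X be a geometric random variable on the nonnegative integers with P[X = k] = p^k q for k ≥ 0, where p ∈ (0,1) and q = 1 - p. Then for every s ∈ (0,1), E[(qX)^s] ≤ p, i.e. ∑_{k ≥ 1} k^s p^k q ≤ p q^{-s}. -/
/-!
For `x ≥ 0` and `0 < s ≤ 1` Bernoulli's inequality gives `x ^ s ≤ s * x + (1 - s)`, and
`0 ^ s = 0`; this is convexity of `s ↦ x ^ s` between `s = 0` and `s = 1`. Averaging, for a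
nonnegative random variable `Y` we get `E[Y ^ s] ≤ s * E[Y] + (1 - s) * P[Y ≠ 0]`.
For `Y = qX` with `X` geometric both `E[qX] = q * (p / q)` and `P[X ≠ 0]` equal `p`.
-/

open Function

lemma Real.rpow_le_mul_add_one_sub {x s : ℝ} (hx : 0 ≤ x) (hs0 : 0 ≤ s) (hs1 : s ≤ 1) :
    x ^ s ≤ s * x + (1 - s) := by
  have h := rpow_one_add_le_one_add_mul_self (s := x - 1) (by linarith) hs0 hs1
  rw [add_sub_cancel] at h
  linarith

lemma tsum_rpow_mul_le {ι : Type*} {w y : ι → ℝ} {s : ℝ} (hw : ∀ i, 0 ≤ w i)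
    (hy : ∀ i, 0 ≤ y i) (hs0 : 0 < s) (hs1 : s ≤ 1) (hw_sum : Summable w)
    (hyw_sum : Summable fun i => y i * w i) :
    ∑' i, y i ^ s * w i ≤ s * ∑' i, y i * w i + (1 - s) * ∑' i, (support y).indicator w i := by
  have hbound : ∀ i, y i ^ s * w i ≤ s * (y i * w i) + (1 - s) * (support y).indicator w i := by
    intro i
    by_cases hyi : y i = 0
    · simp [hyi, Real.zero_rpow hs0.ne']
    · rw [Set.indicator_of_mem (mem_support.2 hyi)]
      nlinarith [Real.rpow_le_mul_add_one_sub (hy i) hs0.le hs1, hw i]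
  have hrhs : Summable fun i => s * (y i * w i) + (1 - s) * (support y).indicator w i :=
    (hyw_sum.mul_left s).add ((hw_sum.indicator _).mul_left (1 - s))
  have hlhs : Summable fun i => y i ^ s * w i :=
    hrhs.of_nonneg_of_le (fun i => mul_nonneg (Real.rpow_nonneg (hy i) s) (hw i)) hbound
  calc ∑' i, y i ^ s * w i
      ≤ ∑' i, (s * (y i * w i) + (1 - s) * (support y).indicator w i) :=
        hlhs.tsum_le_tsum hbound hrhs
    _ = _ := by
        rw [hyw_sum.mul_left s |>.tsum_add ((hw_sum.indicator _).mul_left (1 - s)),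
          tsum_mul_left, tsum_mul_left]

section Geometric

variable {p : ℝ}

lemma tsum_geometric_mul_sub (hp0 : 0 ≤ p) (hp1 : p < 1) :
    ∑' k : ℕ, p ^ k * (1 - p) = 1 := by
  rw [tsum_mul_right, tsum_geometric_of_lt_one hp0 hp1, inv_mul_cancel₀ (sub_pos.2 hp1).ne']

lemma hasSum_mul_coe_mul_geometric_mul_sub (hp0 : 0 ≤ p) (hp1 : p < 1) :
    HasSum (fun k : ℕ => (1 - p) * k * (p ^ k * (1 - p))) p := by
  have hnorm : ‖p‖ < 1 := by rwa [Real.norm_of_nonneg hp0]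
  have h := (hasSum_coe_mul_geometric_of_norm_lt_one hnorm).mul_left ((1 - p) ^ 2)
  rw [mul_div_cancel₀ _ (pow_ne_zero 2 (sub_pos.2 hp1).ne')] at h
  exact h.congr_fun fun k => by ring

lemma tsum_indicator_support_geometric_mul_sub (hp0 : 0 ≤ p) (hp1 : p < 1) :
    ∑' k : ℕ, (support fun k : ℕ => (1 - p) * k).indicator (fun k => p ^ k * (1 - p)) k = p := by
  have hsupp : (support fun k : ℕ => (1 - p) * k) = {0}ᶜ := by
    ext k; simp [(sub_pos.2 hp1).ne']
  have hsum : Summable fun k : ℕ => p ^ k * (1 - p) :=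
    (summable_geometric_of_lt_one hp0 hp1).mul_right _
  rw [hsupp, (hsum.indicator _).tsum_eq_zero_add]
  calc _ = ∑' k : ℕ, p * (p ^ k * (1 - p)) := by
        rw [Set.indicator_of_notMem (by simp), zero_add]
        exact tsum_congr fun k => by rw [Set.indicator_of_mem (by simp)]; ring
    _ = p := by rw [tsum_mul_left, tsum_geometric_mul_sub hp0 hp1, mul_one]

end Geometric

/-- For a geometric random variable `X` on `ℕ` with `P[X = k] = p^k q`
(`q = 1 - p`), and any `s ∈ (0,1)`, we have `E[(qX)^s] ≤ p`, i.e.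
`∑_{k ≥ 0} k^s p^k q ≤ p q^{-s}`. -/
theorem geometric_rpow_moment_le (p s : ℝ) (hp0 : 0 < p) (hp1 : p < 1)
    (hs0 : 0 < s) (hs1 : s < 1) :
    (∑' k : ℕ, ((1 - p) * (k : ℝ)) ^ s * p ^ k * (1 - p)) ≤ p ∧
    (∑' k : ℕ, (k : ℝ) ^ s * p ^ k * (1 - p)) ≤ p * (1 - p) ^ (-s) := by
  have hq : 0 < 1 - p := sub_pos.2 hp1
  have hmoment : ∑' k : ℕ, ((1 - p) * (k : ℝ)) ^ s * p ^ k * (1 - p) ≤ p := by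
    have hmean := hasSum_mul_coe_mul_geometric_mul_sub hp0.le hp1
    have h := tsum_rpow_mul_le (w := fun k : ℕ => p ^ k * (1 - p)) (y := fun k => (1 - p) * k)
      (fun k => by positivity) (fun k => by positivity) hs0 hs1.le
      ((summable_geometric_of_lt_one hp0.le hp1).mul_right _) hmean.summable
    rw [hmean.tsum_eq, tsum_indicator_support_geometric_mul_sub hp0.le hp1] at h
    simp only [mul_assoc] at h ⊢
    linarith
  refine ⟨hmoment, ?_⟩
  rw [Real.rpow_neg hq.le, ← div_eq_mul_inv, le_div_iff₀ (by positivity), mul_comm,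
    ← tsum_mul_left]
  refine le_of_eq_of_le (tsum_congr fun k => ?_) hmoment
  rw [Real.mul_rpow hq.le k.cast_nonneg]
  ring
end

section
/- Let X be a geometric random variable taking values in the positive integers with P[X = k] = q^{k-1} p for k ≥ 1, where p ∈ (0,1) and q = 1 - p. Then for every s ∈ (0,1), E[(pX)^{-s}] ≤ Γ(1-s). Equivalently, ∑_{k ≥ 1} k^{-s} q^k p ≤ Γ(1-s) · q p^s. -/
open MeasureTheory ProbabilityTheory Set Real
open scoped ENNReal

/-!
For `Z > 0` and `s > 0`, Tonelli and `∫₀^∞ t^{s-1} e^{-tz} dt = Γ(s) z^{-s}` give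
`Γ(s) 𝔼[Z^{-s}] = ∫₀^∞ t^{s-1} 𝔼[e^{-tZ}] dt`, so a pointwise smaller Laplace transform means a
smaller negative moment. Mathlib's `geometricMeasure p` counts failures, so `X = N + 1`, and
`𝔼[e^{-tpX}] = p e^{-pt} / (1 - (1-p) e^{-pt}) ≤ 1 / (1 + t) = 𝔼[e^{-tY}]` for `Y ∼ Exp(1)`,
which is `1 + pt ≤ e^{pt}`. Hence `𝔼[(pX)^{-s}] ≤ 𝔼[Y^{-s}] = Γ(1-s)`.
-/

lemma lintegral_rpow_mul_exp_neg_mul_Ioi {a r : ℝ} (ha : 0 < a) (hr : 0 < r) :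
    ∫⁻ t in Ioi 0, ENNReal.ofReal (t ^ (a - 1) * exp (-(r * t))) =
      ENNReal.ofReal (Gamma a * r ^ (-a)) := by
  have hint := integral_rpow_mul_exp_neg_mul_Ioi ha hr
  have hpos : 0 < (1 / r) ^ a * Gamma a := by positivity
  rw [← ofReal_integral_eq_lintegral_ofReal (.of_integral_ne_zero (hint ▸ hpos.ne'))
    ((ae_restrict_mem measurableSet_Ioi).mono fun t (ht : 0 < t) ↦ by positivity), hint,
    one_div, inv_rpow hr.le, ← rpow_neg hr.le, mul_comm]

section MellinLaplace

variable {α β : Type*} [MeasurableSpace α] [MeasurableSpace β] {s : ℝ}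

theorem ofReal_Gamma_mul_lintegral_rpow_neg (μ : Measure α) [SFinite μ] {f : α → ℝ}
    (hf : Measurable f) (hf_pos : ∀ᵐ a ∂μ, 0 < f a) (hs : 0 < s) :
    ENNReal.ofReal (Gamma s) * ∫⁻ a, ENNReal.ofReal (f a ^ (-s)) ∂μ =
      ∫⁻ t in Ioi 0, ENNReal.ofReal (t ^ (s - 1)) *
        ∫⁻ a, ENNReal.ofReal (exp (-(t * f a))) ∂μ := by
  calc ENNReal.ofReal (Gamma s) * ∫⁻ a, ENNReal.ofReal (f a ^ (-s)) ∂μ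
      = ∫⁻ a, (∫⁻ t in Ioi (0 : ℝ), ENNReal.ofReal (t ^ (s - 1) * exp (-(f a * t)))) ∂μ := by
        rw [← lintegral_const_mul' _ _ ENNReal.ofReal_ne_top]
        refine lintegral_congr_ae (hf_pos.mono fun a ha ↦ ?_)
        dsimp only
        rw [lintegral_rpow_mul_exp_neg_mul_Ioi hs ha, ENNReal.ofReal_mul (by positivity)]
    _ = ∫⁻ t in Ioi (0 : ℝ), ∫⁻ a, ENNReal.ofReal (t ^ (s - 1) * exp (-(f a * t))) ∂μ :=
        lintegral_lintegral_swap (by fun_prop)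
    _ = _ := by
        refine lintegral_congr fun t ↦ ?_
        rw [← lintegral_const_mul' _ _ ENNReal.ofReal_ne_top]
        refine lintegral_congr fun a ↦ ?_
        rw [← ENNReal.ofReal_mul' (exp_nonneg _), mul_comm (f a)]

theorem lintegral_rpow_neg_le_of_lintegral_exp_neg_mul_le (μ : Measure α) (ν : Measure β)
    [SFinite μ] [SFinite ν] {f : α → ℝ} {g : β → ℝ} (hf : Measurable f) (hg : Measurable g)
    (hf_pos : ∀ᵐ a ∂μ, 0 < f a) (hg_pos : ∀ᵐ b ∂ν, 0 < g b) (hs : 0 < s)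
    (hfg : ∀ t, 0 < t → ∫⁻ a, ENNReal.ofReal (exp (-(t * f a))) ∂μ ≤
      ∫⁻ b, ENNReal.ofReal (exp (-(t * g b))) ∂ν) :
    ∫⁻ a, ENNReal.ofReal (f a ^ (-s)) ∂μ ≤ ∫⁻ b, ENNReal.ofReal (g b ^ (-s)) ∂ν := by
  rw [← ENNReal.mul_le_mul_iff_right (ENNReal.ofReal_pos.2 (Gamma_pos_of_pos hs)).ne'
    ENNReal.ofReal_ne_top, ofReal_Gamma_mul_lintegral_rpow_neg μ hf hf_pos hs,
    ofReal_Gamma_mul_lintegral_rpow_neg ν hg hg_pos hs]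
  refine setLIntegral_mono (by fun_prop) fun t ht ↦ ?_
  gcongr
  exact hfg t ht

end MellinLaplace

lemma expMeasure_one_eq_withDensity :
    expMeasure 1 = (volume.restrict (Ioi 0)).withDensity fun y ↦ ENNReal.ofReal (exp (-y)) := by
  rw [← withDensity_indicator measurableSet_Ioi, expMeasure, gammaMeasure]
  refine withDensity_congr_ae ?_
  filter_upwards [Measure.ae_ne volume (0 : ℝ)] with y hy
  rcases hy.lt_or_gt with hy | hy
  · simp [gammaPDF_of_neg hy, hy.not_gt]
  · simp [gammaPDF_of_nonneg hy.le, hy]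

lemma lintegral_expMeasure_one {g : ℝ → ℝ≥0∞} (hg : Measurable g) :
    ∫⁻ y, g y ∂expMeasure 1 = ∫⁻ y in Ioi 0, ENNReal.ofReal (exp (-y)) * g y := by
  rw [expMeasure_one_eq_withDensity, lintegral_withDensity_eq_lintegral_mul _ (by fun_prop) hg]
  rfl

lemma ae_expMeasure_one_pos : ∀ᵐ y ∂expMeasure 1, 0 < y := by
  rw [expMeasure_one_eq_withDensity]
  exact (withDensity_absolutelyContinuous _ _).ae_le (ae_restrict_mem measurableSet_Ioi)

lemma lintegral_rpow_neg_expMeasure_one {s : ℝ} (hs : s < 1) :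
    ∫⁻ y, ENNReal.ofReal (y ^ (-s)) ∂expMeasure 1 = ENNReal.ofReal (Gamma (1 - s)) := by
  rw [lintegral_expMeasure_one (by fun_prop)]
  convert lintegral_rpow_mul_exp_neg_mul_Ioi (sub_pos.2 hs) one_pos using 1
  · refine setLIntegral_congr_fun measurableSet_Ioi fun y hy ↦ ?_
    rw [← ENNReal.ofReal_mul (exp_nonneg _)]
    ring_nf
  · simp

lemma lintegral_exp_neg_mul_expMeasure_one {t : ℝ} (ht : -1 < t) :
    ∫⁻ y, ENNReal.ofReal (exp (-(t * y))) ∂expMeasure 1 = ENNReal.ofReal (1 + t)⁻¹ := by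
  rw [lintegral_expMeasure_one (by fun_prop)]
  convert lintegral_rpow_mul_exp_neg_mul_Ioi one_pos (by linarith : 0 < 1 + t) using 1
  · refine setLIntegral_congr_fun measurableSet_Ioi fun y hy ↦ ?_
    rw [← ENNReal.ofReal_mul (exp_nonneg _), ← exp_add, sub_self, rpow_zero, one_mul]
    ring_nf
  · simp [rpow_neg_one]

lemma lintegral_geometricMeasure {p : unitInterval} (hp : p ≠ 0) (g : ℕ → ℝ≥0∞) :
    ∫⁻ n, g n ∂geometricMeasure p = ∑' n, ENNReal.ofReal ((1 - p) ^ n * p) * g n := by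
  simp [geometricMeasure_eq hp, lintegral_sum_measure, lintegral_smul_measure]

lemma lintegral_exp_neg_mul_geometricMeasure {p : unitInterval} (hp : p ≠ 0) {t : ℝ}
    (ht : 0 ≤ t) :
    ∫⁻ n, ENNReal.ofReal (exp (-(t * (p * (n + 1))))) ∂geometricMeasure p =
      ENNReal.ofReal (p * exp (-(p * t)) / (1 - (1 - p) * exp (-(p * t)))) := by
  have hp0 : 0 < (p : ℝ) := unitInterval.pos_iff_ne_zero.2 hp
  set x := (1 - p) * exp (-(p * t))
  have hx0 : 0 ≤ x := mul_nonneg (by simp [p.2.2]) (exp_nonneg _)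
  have hx1 : x < 1 := calc
    x ≤ 1 - p := mul_le_of_le_one_right (by simp [p.2.2]) (exp_le_one_iff.2 (by nlinarith))
    _ < 1 := by linarith
  have hterm (n : ℕ) : ENNReal.ofReal ((1 - p) ^ n * p) *
      ENNReal.ofReal (exp (-(t * (p * (n + 1))))) =
        ENNReal.ofReal (p * exp (-(p * t)) * x ^ n) := by
    rw [← ENNReal.ofReal_mul (geometricMeasure_nonneg p n), mul_pow, ← exp_nat_mul,
      show -(t * (p * (n + 1))) = -(p * t) + n * -(p * t) by ring, exp_add]
    ring_nf
  simp_rw [lintegral_geometricMeasure hp, hterm]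
  rw [← ENNReal.ofReal_tsum_of_nonneg (fun n ↦ by positivity)
    ((summable_geometric_of_lt_one hx0 hx1).mul_left _), tsum_mul_left,
    tsum_geometric_of_lt_one hx0 hx1, div_eq_mul_inv]

lemma mul_exp_neg_div_one_sub_le_inv_one_add {p t : ℝ} (hp : 0 < p) (ht : 0 ≤ t) :
    p * exp (-(p * t)) / (1 - (1 - p) * exp (-(p * t))) ≤ (1 + t)⁻¹ := by
  set e := exp (-(p * t))
  have he : e * exp (p * t) = 1 := by rw [← exp_add, neg_add_cancel, exp_zero]
  have he1 : e ≤ 1 := exp_le_one_iff.2 (by nlinarith)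
  have hbound : e * (p * t + 1) ≤ e * exp (p * t) :=
    mul_le_mul_of_nonneg_left (add_one_le_exp _) (exp_nonneg _)
  have hpe : 0 < p * e := mul_pos hp (exp_pos _)
  rw [inv_eq_one_div, div_le_div_iff₀ (by nlinarith) (by linarith)]
  nlinarith

lemma lintegral_rpow_neg_geometricMeasure_le {p : unitInterval} (hp : p ≠ 0) {s : ℝ}
    (hs0 : 0 < s) (hs1 : s < 1) :
    ∫⁻ n, ENNReal.ofReal ((p * (n + 1)) ^ (-s)) ∂geometricMeasure p ≤
      ENNReal.ofReal (Gamma (1 - s)) := by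
  have hp0 : 0 < (p : ℝ) := unitInterval.pos_iff_ne_zero.2 hp
  have := isProbabilityMeasure_expMeasure one_pos
  rw [← lintegral_rpow_neg_expMeasure_one hs1]
  refine lintegral_rpow_neg_le_of_lintegral_exp_neg_mul_le _ _ (by fun_prop) measurable_id
    (ae_of_all _ fun n ↦ mul_pos hp0 n.cast_add_one_pos) ae_expMeasure_one_pos hs0
    fun t ht ↦ ?_
  rw [lintegral_exp_neg_mul_geometricMeasure hp ht.le,
    lintegral_exp_neg_mul_expMeasure_one (by linarith)]
  exact ENNReal.ofReal_le_ofReal (mul_exp_neg_div_one_sub_le_inv_one_add hp0 ht.le)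

lemma tsum_le_of_tsum_ofReal_le {ι : Type*} {f : ι → ℝ} (hf : ∀ i, 0 ≤ f i) {c : ℝ} (hc : 0 ≤ c)
    (h : ∑' i, ENNReal.ofReal (f i) ≤ ENNReal.ofReal c) : ∑' i, f i ≤ c := by
  have hsum : Summable f := by
    simpa [ENNReal.toReal_ofReal (hf _)] using
      ENNReal.summable_toReal (h.trans_lt ENNReal.ofReal_lt_top).ne
  rwa [← ENNReal.ofReal_tsum_of_nonneg hf hsum, ENNReal.ofReal_le_ofReal_iff hc] at h

/-- For a geometric random variable `X` on the positive integers with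
`P[X = k] = q^{k-1} p` (`q = 1 - p`), and any `s ∈ (0,1)`, we have
`E[(pX)^{-s}] ≤ Γ(1-s)`; equivalently `∑_{k ≥ 1} k^{-s} q^k p ≤ Γ(1-s) q p^s`. -/
theorem geometric_neg_rpow_moment_le (p s : ℝ) (hp0 : 0 < p) (hp1 : p < 1)
    (hs0 : 0 < s) (hs1 : s < 1) :
    (∑' k : ℕ, (p * ((k : ℝ) + 1)) ^ (-s) * (1 - p) ^ k * p) ≤ Real.Gamma (1 - s) ∧
    (∑' k : ℕ, ((k : ℝ) + 1) ^ (-s) * (1 - p) ^ (k + 1) * p) ≤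
      Real.Gamma (1 - s) * (1 - p) * p ^ s := by
  have hmoment := lintegral_rpow_neg_geometricMeasure_le (p := ⟨p, hp0.le, hp1.le⟩)
    (unitInterval.pos_iff_ne_zero.1 hp0) hs0 hs1
  rw [lintegral_geometricMeasure (unitInterval.pos_iff_ne_zero.1 hp0)] at hmoment
  have hfirst : ∑' k : ℕ, (p * ((k : ℝ) + 1)) ^ (-s) * (1 - p) ^ k * p ≤ Gamma (1 - s) := by
    refine tsum_le_of_tsum_ofReal_le (fun k ↦ by positivity)
      (Gamma_nonneg_of_nonneg (by linarith)) (hmoment.trans_eq' (tsum_congr fun k ↦ ?_))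
    rw [← ENNReal.ofReal_mul (by positivity)]
    exact congrArg ENNReal.ofReal (by ring)
  refine ⟨hfirst, ?_⟩
  calc ∑' k : ℕ, ((k : ℝ) + 1) ^ (-s) * (1 - p) ^ (k + 1) * p
      = (1 - p) * p ^ s * ∑' k : ℕ, (p * ((k : ℝ) + 1)) ^ (-s) * (1 - p) ^ k * p := by
        rw [← tsum_mul_left]
        refine tsum_congr fun k ↦ ?_
        rw [mul_rpow hp0.le (by positivity), rpow_neg hp0.le, pow_succ]
        field_simp
    _ ≤ (1 - p) * p ^ s * Gamma (1 - s) := by gcongr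
    _ = Gamma (1 - s) * (1 - p) * p ^ s := by ring
end

section
/- For s ∈ (0, 1/2), a > 0, and K ≥ 1, consider independent Bernoulli random variables Y'_j with P[Y'_j = 1] = (1+a)/(2j+1+Ka) for j ≥ 0, and Y_j with P[Y_j = 1] = a/(j+1+2a) for j ≥ 0. Define the random variable Q̄ by: if Y'_0 = 0 then Q̄ = min{j ≥ 1 : Y'_j = 1}, and if Y'_0 = 1 then Q̄ = 1/min{j ≥ 1 : Y_j = 1}. Then E[Q̄^s] ≤ C(s,K) · a for a constant C(s,K) depending only on s and K. -/
/-!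
Split according to `Y'_0`. On `{Y'_0 = 1}` we have `Q̄^s = T^{-s}` for the first success `T ≥ 1`
of `Y`, and `P[T = n] ≤ P[Y_n = 1] ≤ a / n`, so this part contributes at most `a ∑ n^{-1-s}`.
On `{Y'_0 = 0}`, `Q̄ = n` exactly when `Y'` first succeeds at `n`, which has probability
`(1 - p'_0) ∏_{1 ≤ j < n} (1 - p'_j) p'_n ≤ 16 K² a n^{-3/2}`: for `a ≤ 3` because
`1 - p'_0 ≤ K a` and the product telescopes against `√(2j + K a)`, for `a ≥ 3` because the
product telescopes against `(2j - 2 + 4K)²`. As `s < 1/2`, `∑ n^{s - 3/2}` converges.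
-/

open Finset MeasureTheory ProbabilityTheory

theorem prod_Ico_le_div_of_le_div {f u : ℕ → ℝ} (hf : ∀ j, 0 ≤ f j) (hu : ∀ j, 0 < u j)
    (hfu : ∀ j, f j ≤ u j / u (j + 1)) {m n : ℕ} (hmn : m ≤ n) :
    ∏ j ∈ Ico m n, f j ≤ u m / u n := by
  induction n, hmn using Nat.le_induction with
  | base => simp [div_self (hu m).ne']
  | succ n hmn ih =>
    have := hu m; have := hu n; have := hu (n + 1)
    calc ∏ j ∈ Ico m (n + 1), f j = (∏ j ∈ Ico m n, f j) * f n := prod_Ico_succ_top hmn _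
      _ ≤ u m / u n * (u n / u (n + 1)) := mul_le_mul ih (hfu n) (hf n) (by positivity)
      _ = u m / u (n + 1) := by field_simp

theorem one_sub_inv_le_sqrt_div {x : ℝ} (hx : 1 ≤ x) : 1 - x⁻¹ ≤ √((x - 1) / (x + 1)) := by
  have hx0 : 0 < x := by linarith
  apply Real.le_sqrt_of_sq_le
  rw [← one_div, one_sub_div hx0.ne', div_pow, div_le_div_iff₀ (by positivity) (by linarith)]
  nlinarith [mul_nonneg (sub_nonneg.2 hx) hx0.le]

/-- `P[Y'_j = 1]`. -/
noncomputable def succProb (K a : ℝ) (j : ℕ) : ℝ := (1 + a) / (2 * j + 1 + K * a)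

section succProb

variable {K a : ℝ}

theorem succProb_nonneg (hK : 1 ≤ K) (ha : 0 < a) (j : ℕ) : 0 ≤ succProb K a j := by
  unfold succProb; positivity

theorem succProb_le_one (hK : 1 ≤ K) (ha : 0 < a) (j : ℕ) : succProb K a j ≤ 1 := by
  unfold succProb
  rw [div_le_one (by positivity)]
  nlinarith [(Nat.cast_nonneg j : (0 : ℝ) ≤ j)]

theorem one_sub_succProb_zero_le (hK : 1 ≤ K) (ha : 0 < a) : 1 - succProb K a 0 ≤ K * a := by
  unfold succProb
  rw [Nat.cast_zero, mul_zero, zero_add, one_sub_div (by positivity), div_le_iff₀ (by positivity)]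
  nlinarith [mul_pos (by positivity : 0 < K * a) (by positivity : 0 < K * a)]

theorem mul_succProb_le (hK : 1 ≤ K) (ha : 0 < a) (n : ℕ) : n * succProb K a n ≤ (1 + a) / 2 := by
  have : (0 : ℝ) ≤ n := n.cast_nonneg
  unfold succProb
  rw [mul_div_assoc', div_le_div_iff₀ (by positivity) two_pos]
  nlinarith [mul_pos (by positivity : 0 < K * a) (by linarith : (0 : ℝ) < 1 + a)]

theorem prod_one_sub_succProb_le_sqrt (hK : 1 ≤ K) (ha : 0 < a) {n : ℕ} (hn : 1 ≤ n) :
    ∏ j ∈ Ico 1 n, (1 - succProb K a j) ≤ √(2 + K * a) / √(2 * n + K * a) := by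
  have hKa : 0 < K * a := by positivity
  have := prod_Ico_le_div_of_le_div (f := fun j => 1 - succProb K a j)
    (u := fun j : ℕ => √(2 * j + K * a)) (fun j => sub_nonneg.2 (succProb_le_one hK ha j))
    (fun j => by positivity) ?_ hn
  · simpa using this
  intro j
  calc 1 - succProb K a j ≤ 1 - (2 * j + 1 + K * a)⁻¹ := by
        unfold succProb
        rw [← one_div]
        gcongr; linarith
    _ ≤ √((2 * j + 1 + K * a - 1) / (2 * j + 1 + K * a + 1)) :=
        one_sub_inv_le_sqrt_div (by linarith [(Nat.cast_nonneg j : (0 : ℝ) ≤ j)])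
    _ = √(2 * j + K * a) / √(2 * ((j + 1 : ℕ) : ℝ) + K * a) := by
        rw [Real.sqrt_div' _ (by positivity)]; push_cast; ring_nf

theorem prod_one_sub_succProb_le_sq (hK : 1 ≤ K) (ha : 3 ≤ a) {n : ℕ} (hn : 1 ≤ n) :
    ∏ j ∈ Ico 1 n, (1 - succProb K a j) ≤ (4 * K) ^ 2 / (2 * n - 2 + 4 * K) ^ 2 := by
  have := prod_Ico_le_div_of_le_div (f := fun j => 1 - succProb K a j)
    (u := fun j : ℕ => (2 * j - 2 + 4 * K) ^ 2)
    (fun j => sub_nonneg.2 (succProb_le_one hK (by linarith) j))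
    (fun j => by have : (0 : ℝ) ≤ j := j.cast_nonneg; nlinarith) ?_ hn
  · simpa using this
  intro j
  have hj : (0 : ℝ) ≤ j := j.cast_nonneg
  have hy : 0 < 2 * (j : ℝ) + 4 * K := by linarith
  -- `P[Y'_j = 1] ≥ 4 / (2j + 4K)` once `a ≥ 3`, and `1 - 4/y ≤ (1 - 2/y)²`
  calc 1 - succProb K a j ≤ 1 - 2 * (2 / (2 * j + 4 * K)) := by
        unfold succProb
        gcongr 1 - ?_
        rw [← mul_div_assoc, div_le_div_iff₀ (by positivity) (by positivity)]
        nlinarith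
    _ ≤ (1 - 2 / (2 * j + 4 * K)) ^ 2 := by
        nlinarith [sq_nonneg (2 / (2 * (j : ℝ) + 4 * K))]
    _ = (2 * j - 2 + 4 * K) ^ 2 / (2 * ((j + 1 : ℕ) : ℝ) - 2 + 4 * K) ^ 2 := by
        rw [← div_pow, one_sub_div hy.ne']
        push_cast; ring_nf

theorem prod_one_sub_succProb_mul_succProb_le (hK : 1 ≤ K) (ha : 0 < a) {n : ℕ} (hn : 1 ≤ n) :
    (∏ j ∈ range n, (1 - succProb K a j)) * succProb K a n ≤ 16 * K ^ 2 * a / (n * √n) := by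
  have hn' : (1 : ℝ) ≤ n := by exact_mod_cast hn
  rw [range_eq_Ico, prod_eq_prod_Ico_succ_bot (by omega), le_div_iff₀ (by positivity)]
  set P := ∏ j ∈ Ico 1 n, (1 - succProb K a j)
  have hP : 0 ≤ P := prod_nonneg fun j _ => sub_nonneg.2 (succProb_le_one hK ha j)
  have hpn := succProb_nonneg hK ha n
  rcases le_total a 3 with ha3 | ha3
  · have hPn : P * √n ≤ 2 * K := calc
      P * √n ≤ √(2 + K * a) / √(2 * n + K * a) * √n := by
        gcongr; exact prod_one_sub_succProb_le_sqrt hK ha hn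
      _ = √((2 + K * a) * n / (2 * n + K * a)) := by
        rw [Real.sqrt_div' _ (by positivity), Real.sqrt_mul (by positivity)]; ring
      _ ≤ √((2 * K) ^ 2) := by
        gcongr
        rw [div_le_iff₀ (by positivity)]
        have h1 : K * a * n ≤ K * 3 * n := by gcongr
        have h2 : K * n ≤ K * K * n := by gcongr; nlinarith
        have h3 : (n : ℝ) ≤ K * n := by nlinarith
        nlinarith [mul_pos (by positivity : 0 < K * K) ha]
      _ = 2 * K := Real.sqrt_sq (by linarith)
    calc (1 - succProb K a 0) * P * succProb K a n * (n * √n)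
        = (1 - succProb K a 0) * (P * √n) * (n * succProb K a n) := by ring
      _ ≤ (K * a) * (2 * K) * 2 := by
        gcongr
        · exact one_sub_succProb_zero_le hK ha
        · linarith [mul_succProb_le hK ha n]
      _ ≤ 16 * K ^ 2 * a := by nlinarith
  · have hPn : P * n ^ 2 ≤ 16 * K ^ 2 := calc
      P * n ^ 2 ≤ (4 * K) ^ 2 / (2 * n - 2 + 4 * K) ^ 2 * n ^ 2 := by
        gcongr; exact prod_one_sub_succProb_le_sq hK ha3 hn
      _ ≤ 16 * K ^ 2 := by
        rw [div_mul_eq_mul_div, div_le_iff₀ (by nlinarith)]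
        have : (n : ℝ) ^ 2 ≤ (2 * n - 2 + 4 * K) ^ 2 := by gcongr; linarith
        nlinarith
    have hp0' : 1 - succProb K a 0 ≤ 1 := by linarith [succProb_nonneg hK ha 0]
    have hn2 : (n : ℝ) * √n ≤ n ^ 2 := by nlinarith [Real.sqrt_le_self_iff.2 (Or.inr hn')]
    calc (1 - succProb K a 0) * P * succProb K a n * (n * √n)
        = ((1 - succProb K a 0) * succProb K a n) * (P * (n * √n)) := by ring
      _ ≤ 1 * (P * n ^ 2) :=
        mul_le_mul (by nlinarith [succProb_le_one hK ha n]) (by gcongr)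
          (mul_nonneg hP (by positivity)) zero_le_one
      _ ≤ 16 * K ^ 2 * a := by nlinarith

theorem rpow_mul_prod_one_sub_succProb_mul_succProb_le (hK : 1 ≤ K) (ha : 0 < a) {s : ℝ}
    (hs : 0 < s) (n : ℕ) :
    (n : ℝ) ^ s * ((∏ j ∈ range n, (1 - succProb K a j)) * succProb K a n) ≤
      16 * K ^ 2 * a * (n : ℝ) ^ (s - 3 / 2) := by
  rcases n.eq_zero_or_pos with rfl | hn
  · rw [Nat.cast_zero, Real.zero_rpow hs.ne', zero_mul]
    positivity
  have hn0 : (0 : ℝ) < n := by exact_mod_cast hn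
  calc (n : ℝ) ^ s * ((∏ j ∈ range n, (1 - succProb K a j)) * succProb K a n)
      ≤ (n : ℝ) ^ s * (16 * K ^ 2 * a / (n * √n)) := by
        gcongr; exact prod_one_sub_succProb_mul_succProb_le hK ha hn
    _ = 16 * K ^ 2 * a * (n : ℝ) ^ (s - 3 / 2) := by
        rw [Real.sqrt_eq_rpow, ← Real.rpow_one_add' hn0.le (by norm_num),
          Real.rpow_sub hn0]
        norm_num; ring

end succProb

theorem rpow_neg_mul_div_le {s a : ℝ} (hs : 0 < s) (ha : 0 < a) (n : ℕ) :
    (n : ℝ) ^ (-s) * (a / (n + 1 + 2 * a)) ≤ a * (n : ℝ) ^ (-(1 + s)) := by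
  rcases n.eq_zero_or_pos with rfl | hn
  · rw [Nat.cast_zero, Real.zero_rpow (by linarith), Real.zero_rpow (by linarith)]
    simp
  have hn0 : (0 : ℝ) < n := by exact_mod_cast hn
  calc (n : ℝ) ^ (-s) * (a / (n + 1 + 2 * a)) ≤ (n : ℝ) ^ (-s) * (a / n) := by
        gcongr; linarith
    _ = a * (n : ℝ) ^ (-(1 + s)) := by
        rw [neg_add, Real.rpow_add hn0, Real.rpow_neg_one]; ring

theorem sInf_eq_zero_or_firstHit (b : ℕ → Bool) :
    sInf {j | 1 ≤ j ∧ b j = true} = 0 ∨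
      (b (sInf {j | 1 ≤ j ∧ b j = true}) = true ∧
        ∀ j, 1 ≤ j → j < sInf {j | 1 ≤ j ∧ b j = true} → b j = false) := by
  rcases Set.eq_empty_or_nonempty {j | 1 ≤ j ∧ b j = true} with h | h
  · left; rw [h, Nat.sInf_empty]
  · right
    refine ⟨(Nat.sInf_mem h).2, fun j hj hlt => ?_⟩
    simpa [hj] using Nat.notMem_of_lt_sInf hlt

theorem ofReal_rpow_le_tsum {s : ℝ} (hs : 0 < s) (b c : ℕ → Bool) :
    ENNReal.ofReal ((if c 0 then (1 : ℝ) / (sInf {j : ℕ | 1 ≤ j ∧ b j = true} : ℕ)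
        else ((sInf {j : ℕ | 1 ≤ j ∧ c j = true} : ℕ) : ℝ)) ^ s) ≤
      ∑' n : ℕ, ((if b n then ENNReal.ofReal ((n : ℝ) ^ (-s)) else 0) +
        (if ∀ j ∈ range (n + 1), c j = decide (j = n) then ENNReal.ofReal ((n : ℝ) ^ s)
          else 0)) := by
  cases hc0 : c 0
  · rw [if_neg Bool.false_ne_true]
    rcases sInf_eq_zero_or_firstHit c with h | ⟨hτ, hlt⟩
    · simp [h, Real.zero_rpow hs.ne']
    set τ := sInf {j | 1 ≤ j ∧ c j = true}
    have hfirst : ∀ j ∈ range (τ + 1), c j = decide (j = τ) := by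
      intro j hj
      rcases (Nat.lt_succ_iff.1 (mem_range.1 hj)).lt_or_eq with hj | rfl
      · rcases j.eq_zero_or_pos with rfl | hj0
        · simpa [hj.ne] using hc0
        · simpa [hj.ne] using hlt j hj0 hj
      · simpa using hτ
    refine le_trans ?_ (ENNReal.le_tsum τ)
    rw [if_pos hfirst]
    exact le_add_self
  · rw [if_pos rfl]
    rcases sInf_eq_zero_or_firstHit b with h | ⟨hτ, -⟩
    · simp [h, Real.zero_rpow hs.ne']
    refine le_trans ?_ (ENNReal.le_tsum (sInf {j | 1 ≤ j ∧ b j = true}))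
    rw [if_pos hτ, one_div, Real.inv_rpow (Nat.cast_nonneg _), ← Real.rpow_neg (Nat.cast_nonneg _)]
    exact le_self_add

section firstHitSet

variable {Ω : Type*} [MeasurableSpace Ω]

/-- The event `X 0 = … = X (n - 1) = false`, `X n = true`. -/
def firstHitSet (X : ℕ → Ω → Bool) (n : ℕ) : Set Ω :=
  ⋂ j ∈ range (n + 1), X j ⁻¹' {decide (j = n)}

theorem measurableSet_firstHitSet {X : ℕ → Ω → Bool} (hX : ∀ j, Measurable (X j)) (n : ℕ) :
    MeasurableSet (firstHitSet X n) :=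
  Finset.measurableSet_biInter _ fun j _ => hX j (measurableSet_singleton _)

theorem measure_firstHitSet {μ : Measure Ω} [IsProbabilityMeasure μ] {X : ℕ → Ω → Bool}
    (hX : ∀ j, Measurable (X j)) (hind : iIndepFun X μ) {q : ℕ → ℝ} (hq0 : ∀ j, 0 ≤ q j)
    (hq : ∀ j, μ (X j ⁻¹' {true}) = ENNReal.ofReal (q j)) (n : ℕ) :
    μ (firstHitSet X n) = ENNReal.ofReal ((∏ j ∈ range n, (1 - q j)) * q n) := by
  have hq1 (j : ℕ) : q j ≤ 1 := by
    have := hq j ▸ prob_le_one (μ := μ) (s := X j ⁻¹' {true})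
    exact ENNReal.ofReal_le_one.1 this
  have hfalse (j : ℕ) : μ (X j ⁻¹' {false}) = ENNReal.ofReal (1 - q j) := by
    rw [show X j ⁻¹' {false} = (X j ⁻¹' {true})ᶜ by ext; simp,
      prob_compl_eq_one_sub (hX j (measurableSet_singleton _)), hq, ENNReal.ofReal_sub _ (hq0 j),
      ENNReal.ofReal_one]
  rw [firstHitSet, hind.measure_inter_preimage_eq_mul _ fun j _ => measurableSet_singleton _,
    prod_range_succ, decide_eq_true rfl, hq,
    ENNReal.ofReal_mul (prod_nonneg fun j _ => by linarith [hq1 j]),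
    ENNReal.ofReal_prod_of_nonneg fun j _ => by linarith [hq1 j]]
  congr 1
  refine prod_congr rfl fun j hj => ?_
  rw [decide_eq_false (mem_range.1 hj).ne, hfalse]

theorem lintegral_ofReal_rpow_le_tsum {μ : Measure Ω} {s : ℝ} (hs : 0 < s) {Y Y' : ℕ → Ω → Bool}
    (hY : ∀ j, Measurable (Y j)) (hY' : ∀ j, Measurable (Y' j)) :
    ∫⁻ ω, ENNReal.ofReal ((if Y' 0 ω then
        (1 : ℝ) / (sInf {j : ℕ | 1 ≤ j ∧ Y j ω = true} : ℕ)
      else ((sInf {j : ℕ | 1 ≤ j ∧ Y' j ω = true} : ℕ) : ℝ)) ^ s) ∂μ ≤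
      ∑' n : ℕ, (ENNReal.ofReal ((n : ℝ) ^ (-s)) * μ (Y n ⁻¹' {true}) +
        ENNReal.ofReal ((n : ℝ) ^ s) * μ (firstHitSet Y' n)) := by
  have hE (n : ℕ) : MeasurableSet (Y n ⁻¹' {true}) := hY n (measurableSet_singleton _)
  calc _ ≤ ∫⁻ ω, ∑' n : ℕ,
          ((Y n ⁻¹' {true}).indicator (fun _ => ENNReal.ofReal ((n : ℝ) ^ (-s))) ω +
            (firstHitSet Y' n).indicator (fun _ => ENNReal.ofReal ((n : ℝ) ^ s)) ω) ∂μ := by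
        refine lintegral_mono fun ω =>
          (ofReal_rpow_le_tsum hs (fun j => Y j ω) (fun j => Y' j ω)).trans_eq ?_
        classical
        simp only [Set.indicator_apply, firstHitSet, Set.mem_iInter₂, Set.mem_preimage,
          Set.mem_singleton_iff]
    _ = _ := by
        have hB := measurableSet_firstHitSet hY'
        refine (lintegral_tsum fun n => ?_).trans (tsum_congr fun n => ?_)
        · exact ((measurable_const.indicator (hE n)).add
            (measurable_const.indicator (hB n))).aemeasurable
        rw [lintegral_add_left (measurable_const.indicator (hE n)),
          lintegral_indicator_const (hE n), lintegral_indicator_const (hB n)]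

end firstHitSet

theorem integral_le_of_lintegral_ofReal_le {Ω : Type*} [MeasurableSpace Ω] {μ : Measure Ω}
    {f : Ω → ℝ} (hf : ∀ ω, 0 ≤ f ω) {c : ℝ} (hc : 0 ≤ c)
    (h : ∫⁻ ω, ENNReal.ofReal (f ω) ∂μ ≤ ENNReal.ofReal c) : ∫ ω, f ω ∂μ ≤ c :=
  calc ∫ ω, f ω ∂μ ≤ ‖∫ ω, f ω ∂μ‖ := Real.le_norm_self _
    _ ≤ (∫⁻ ω, ENNReal.ofReal ‖f ω‖ ∂μ).toReal := norm_integral_le_lintegral_norm f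
    _ ≤ c := by
      simp_rw [Real.norm_of_nonneg (hf _)]
      exact ENNReal.toReal_le_of_le_ofReal hc h

/-- For `s ∈ (0, 1/2)` and `K ≥ 1` there is a constant `C(s,K)` such
that for every `a > 0` and every family of independent Bernoulli random variables
`Y'_j` with `P[Y'_j = 1] = (1+a)/(2j+1+Ka)` and `Y_j` with `P[Y_j = 1] = a/(j+1+2a)`
(`j ≥ 0`, all jointly independent), the random variable `Q̄` defined by
`Q̄ = min{j ≥ 1 : Y'_j = 1}` if `Y'_0 = 0` and `Q̄ = 1/min{j ≥ 1 : Y_j = 1}` if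
`Y'_0 = 1` satisfies `E[Q̄^s] ≤ C(s,K) · a`. -/
theorem dominating_ratio_moment_bound (s K : ℝ) (hs0 : 0 < s) (hs1 : s < 1 / 2)
    (hK : 1 ≤ K) :
    ∃ C > 0, ∀ a : ℝ, 0 < a →
      ∀ (Ω : Type) (_ : MeasurableSpace Ω) (μ : Measure Ω),
        IsProbabilityMeasure μ →
        ∀ Y Y' : ℕ → Ω → Bool,
          (∀ j, Measurable (Y j)) → (∀ j, Measurable (Y' j)) →
          iIndepFun (Sum.elim Y Y') μ →
          (∀ j : ℕ, μ (Y j ⁻¹' {true}) = ENNReal.ofReal (a / (j + 1 + 2 * a))) →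
          (∀ j : ℕ, μ (Y' j ⁻¹' {true}) =
            ENNReal.ofReal ((1 + a) / (2 * j + 1 + K * a))) →
          (∫ ω, (if Y' 0 ω then
              (1 : ℝ) / (sInf {j : ℕ | 1 ≤ j ∧ Y j ω = true} : ℕ)
            else
              ((sInf {j : ℕ | 1 ≤ j ∧ Y' j ω = true} : ℕ) : ℝ)) ^ s ∂μ) ≤ C * a := by
  set w : ℕ → ℝ := fun n => (n : ℝ) ^ (-(1 + s)) + 16 * K ^ 2 * (n : ℝ) ^ (s - 3 / 2)
  have hw0 (n : ℕ) : 0 ≤ w n := by positivity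
  have hw : Summable w := (Real.summable_nat_rpow.2 (by linarith)).add
    ((Real.summable_nat_rpow.2 (by linarith)).mul_left _)
  refine ⟨∑' n, w n, hw.tsum_pos hw0 1 (by simp [w]; positivity), ?_⟩
  intro a ha Ω _ μ _ Y Y' hY hY' hind hYp hY'p
  refine integral_le_of_lintegral_ofReal_le (fun ω => by positivity) (by positivity) ?_
  refine (lintegral_ofReal_rpow_le_tsum hs0 hY hY').trans ?_
  rw [mul_comm, ← tsum_mul_left, ENNReal.ofReal_tsum_of_nonneg (fun n => by positivity)
    (hw.mul_left a)]
  have hind' : iIndepFun Y' μ := iIndepFun.precomp (g := Sum.inr) Sum.inr_injective hind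
  refine ENNReal.tsum_le_tsum fun n => ?_
  have hprob : 0 ≤ (∏ j ∈ range n, (1 - succProb K a j)) * succProb K a n :=
    mul_nonneg (prod_nonneg fun j _ => sub_nonneg.2 (succProb_le_one hK ha j))
      (succProb_nonneg hK ha n)
  rw [hYp, measure_firstHitSet hY' hind' (succProb_nonneg hK ha) hY'p,
    ← ENNReal.ofReal_mul (by positivity), ← ENNReal.ofReal_mul (by positivity),
    ← ENNReal.ofReal_add (by positivity) (by positivity)]
  refine ENNReal.ofReal_le_ofReal ?_
  have hY_term := rpow_neg_mul_div_le hs0 ha n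
  have hY'_term := rpow_mul_prod_one_sub_succProb_mul_succProb_le hK ha hs0 n
  simp only [w]
  linarith
end

section
/- Consider two walkers on the path {-1, 0, 1}, both starting at 0, where at each time step one of the two walkers is chosen uniformly at random (independently) to move. Let τ_0 = 0 and τ_{n+1} = inf{k > τ_n : both walkers are at 0 at time k}. Then for every n ≥ 0 and l ≥ 1, P[τ_{n+1} - τ_n = 2l] = 2^{-l}, and E[τ_{n+1} - τ_n] = 4. -/
/-!
Both walkers are at the centre at time `k` iff `k` is even and walker 1 has moved an even
number of times. Group the steps after an even time into consecutive pairs: a pair changes the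
parity of walker 1's moves exactly when it moves two different walkers, which happens with
probability `1/2`, independently for each pair. Hence, after a return at time `a`, the next
return is at `a + 2l` exactly when the first `l` pairs follow one fixed agree/disagree pattern,
an event of probability `2^{-l}` that depends only on the steps after `a`. Up to a null set,
`{τ_n = a}` depends only on the steps before `a`, so summing over the values of `τ_n` gives
`P[τ_{n+1} - τ_n = 2l] = 2^{-l}`, and the mean gap is `∑ 2l 2^{-l} = 4`.
-/

open MeasureTheory ProbabilityTheory Finset

/-- On the path `{-1,0,1}` with both walkers starting at `0`, each chosen walker
alternates between `0` and an outer node, so at time `k` both walkers are at `0` iff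
each walker has been chosen an even number of times. `S i = true` means walker 1 is
chosen to move at step `i`. This predicate says both walkers are at `0` at time `k`. -/
def bothAtCenter {Ω : Type*} (S : ℕ → Ω → Bool) (k : ℕ) (ω : Ω) : Prop :=
  Even ((Finset.range k).filter (fun i => S i ω = true)).card ∧
  Even ((Finset.range k).filter (fun i => S i ω = false)).card

/-- The successive times `τ_0 = 0 < τ_1 < τ_2 < ⋯` at which both walkers are at the
center node `0`. -/
noncomputable def meetingTime {Ω : Type*} (S : ℕ → Ω → Bool) : ℕ → Ω → ℕ
  | 0 => fun _ => 0
  | n + 1 => fun ω => sInf {k | meetingTime S n ω < k ∧ bothAtCenter S k ω}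

open scoped ENNReal

theorem Nat.sInf_setOf_lt_and_eq_iff {p : ℕ → Prop} {a b : ℕ} (hab : a < b) :
    sInf {k | a < k ∧ p k} = b ↔ p b ∧ ∀ k, a < k → k < b → ¬p k := by
  constructor
  · intro h
    have hne : {k | a < k ∧ p k}.Nonempty := Nat.nonempty_of_pos_sInf (by omega)
    refine ⟨h ▸ (Nat.sInf_mem hne).2, fun k hak hkb hk => ?_⟩
    exact (Nat.sInf_le (show k ∈ {k | a < k ∧ p k} from ⟨hak, hk⟩)).not_gt (h ▸ hkb)
  · rintro ⟨hb, hbetween⟩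
    refine IsLeast.csInf_eq ⟨⟨hab, hb⟩, fun k ⟨hak, hk⟩ => ?_⟩
    exact not_lt.1 fun hkb => hbetween k hak hkb hk

theorem forall_le_iff_iff_forall_lt_succ {E F : ℕ → Prop} (h0 : E 0 ↔ F 0) (l : ℕ) :
    (∀ j ≤ l, (E j ↔ F j)) ↔ ∀ j < l, ((E j ↔ E (j + 1)) ↔ (F j ↔ F (j + 1))) := by
  induction l with
  | zero => simp [h0]
  | succ l ih =>
    simp only [Nat.le_succ_iff_eq_or_le (n := l), or_imp, forall_and, forall_eq,
      Nat.forall_lt_succ_right, ← ih]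
    constructor
    · rintro ⟨hsucc, hle⟩
      exact ⟨hle, by have := hle l le_rfl; tauto⟩
    · rintro ⟨hle, hinc⟩
      exact ⟨by have := hle l le_rfl; tauto, hle⟩

theorem measurable_sInf_setOf {Ω : Type*} [MeasurableSpace Ω] {q : ℕ → Ω → Prop}
    (hq : ∀ k, MeasurableSet {ω | q k ω}) : Measurable fun ω => sInf {k | q k ω} := by
  refine measurable_to_countable' fun b => ?_
  have hfiber : (fun ω => sInf {k | q k ω}) ⁻¹' {b} =
      {ω | (q b ω ∧ ∀ k, k < b → ¬q k ω) ∨ (b = 0 ∧ ∀ k, ¬q k ω)} := by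
    ext ω
    simp only [Set.mem_preimage, Set.mem_singleton_iff, Set.mem_ofPred_eq]
    constructor
    · rintro rfl
      rcases Set.eq_empty_or_nonempty {k | q k ω} with hempty | hne
      · exact Or.inr ⟨by rw [hempty, Nat.sInf_empty], fun k hk => hempty.subset hk⟩
      · exact Or.inl ⟨Nat.sInf_mem hne, fun k hk => Nat.notMem_of_lt_sInf hk⟩
    · rintro (⟨hb, hlt⟩ | ⟨rfl, hnone⟩)
      · exact IsLeast.csInf_eq ⟨hb, fun k hk => not_lt.1 fun h => hlt k h hk⟩
      · rw [show {k | q k ω} = ∅ from Set.eq_empty_of_forall_notMem hnone, Nat.sInf_empty]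
  rw [hfiber]
  have hq' : ∀ k, Measurable (q k) := fun k => measurableSet_setOfPred.1 (hq k)
  exact measurableSet_setOfPred.2 (((hq' b).and (Measurable.forall fun k =>
    measurable_const.imp (hq' k).not)).or (measurable_const.and (Measurable.forall fun k =>
      (hq' k).not)))

theorem measure_setOf_mem_of_fiber {Ω : Type*} [MeasurableSpace Ω] {μ : Measure Ω}
    [IsProbabilityMeasure μ] {τ : Ω → ℕ} (hτ : Measurable τ) {A : ℕ → Set Ω}
    (hA : ∀ a, MeasurableSet (A a)) {c : ℝ≥0∞}
    (h : ∀ a, μ (τ ⁻¹' {a} ∩ A a) = μ (τ ⁻¹' {a}) * c) : μ {ω | ω ∈ A (τ ω)} = c := by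
  have hunion : {ω | ω ∈ A (τ ω)} = ⋃ a, τ ⁻¹' {a} ∩ A a := by ext ω; simp
  have hfibers : ⋃ a, τ ⁻¹' {a} = Set.univ := by ext ω; simp
  rw [hunion, measure_iUnion (fun a b hab => (pairwise_disjoint_fiber τ hab).mono
      Set.inter_subset_left Set.inter_subset_left)
      (fun a => (hτ (measurableSet_singleton a)).inter (hA a)), tsum_congr h,
    ENNReal.tsum_mul_right, ← measure_iUnion (pairwise_disjoint_fiber τ)
      (fun a => hτ (measurableSet_singleton a)), hfibers, measure_univ, one_mul]

theorem lintegral_natCast_eq_tsum {Ω : Type*} [MeasurableSpace Ω] {μ : Measure Ω} {f : Ω → ℕ}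
    (hf : Measurable f) : ∫⁻ ω, (f ω : ℝ≥0∞) ∂μ = ∑' k : ℕ, k * μ (f ⁻¹' {k}) := by
  rw [← lintegral_map measurable_from_nat hf, lintegral_countable']
  simp_rw [Measure.map_apply hf (measurableSet_singleton _)]

theorem ENNReal.tsum_two_mul_mul_half_pow : ∑' l : ℕ, (2 * l : ℝ≥0∞) * (1 / 2) ^ l = 4 := by
  have hsum : Summable fun l : ℕ => (l : ℝ) * (1 / 2) ^ l :=
    (summable_pow_mul_geometric_of_norm_lt_one 1 (r := (1 / 2 : ℝ)) (by norm_num)).congr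
      fun l => by simp
  have hreal : ∑' l : ℕ, (2 * l : ℝ) * (1 / 2) ^ l = 4 := by
    simp_rw [mul_assoc]
    rw [tsum_mul_left, tsum_coe_mul_geometric_of_norm_lt_one (by norm_num)]
    norm_num
  rw [← ENNReal.ofReal_ofNat 4, ← hreal,
    ENNReal.ofReal_tsum_of_nonneg (fun l => by positivity)
      ((hsum.mul_left 2).congr fun l => by ring)]
  congr 1 with l
  rw [ENNReal.ofReal_mul (by positivity), ENNReal.ofReal_mul (by positivity),
    ENNReal.ofReal_pow (by positivity)]
  simp

section DeterminedBy

variable {Ω ι β : Type*} (X : ι → Ω → β)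

def DeterminedBy (I : Finset ι) (A : Set Ω) : Prop :=
  ∀ ω ω', (∀ i ∈ I, X i ω = X i ω') → ω ∈ A → ω' ∈ A

variable {X}

theorem DeterminedBy.eq_preimage_image {I : Finset ι} {A : Set Ω} (hA : DeterminedBy X I A) :
    A = (fun ω (i : I) => X i ω) ⁻¹' ((fun ω (i : I) => X i ω) '' A) := by
  refine (Set.subset_preimage_image _ _).antisymm ?_
  rintro ω ⟨ω', hω'A, heq⟩
  exact hA ω' ω (fun i hi => congrFun heq ⟨i, hi⟩) hω'A

variable [MeasurableSpace Ω] [MeasurableSpace β] [Countable β] [MeasurableSingletonClass β]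

theorem DeterminedBy.measurableSet (hX : ∀ i, Measurable (X i)) {I : Finset ι} {A : Set Ω}
    (hA : DeterminedBy X I A) : MeasurableSet A := by
  rw [hA.eq_preimage_image]
  exact measurable_pi_lambda (fun ω (i : I) => X i ω) (fun i => hX i)
    (Set.to_countable _).measurableSet

theorem DeterminedBy.measure_inter_eq_mul {μ : Measure Ω} (hX : ∀ i, Measurable (X i))
    (hindep : iIndepFun X μ) {I J : Finset ι} (hIJ : Disjoint I J) {A B : Set Ω}
    (hA : DeterminedBy X I A) (hB : DeterminedBy X J B) : μ (A ∩ B) = μ A * μ B := by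
  rw [hA.eq_preimage_image, hB.eq_preimage_image]
  exact (hindep.indepFun_finset I J hIJ hX).measure_inter_preimage_eq_mul _ _
    (Set.to_countable _).measurableSet (Set.to_countable _).measurableSet

end DeterminedBy

section Combinatorics

variable {Ω : Type*} (S : ℕ → Ω → Bool) (ω : Ω)

theorem bothAtCenter_iff_even_count (k : ℕ) :
    bothAtCenter S k ω ↔ Even k ∧ Even (Nat.count (fun i => S i ω = true) k) := by
  have hk : #{i ∈ range k | S i ω = true} + #{i ∈ range k | S i ω = false} = k := by
    simpa using card_filter_add_card_filter_not (s := range k) (fun i => S i ω = true)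
  have hparity : Even k ↔ (Even #{i ∈ range k | S i ω = true} ↔
      Even #{i ∈ range k | S i ω = false}) := by
    rw [← Nat.even_add, hk]
  rw [bothAtCenter, Nat.count_eq_card_filter_range, hparity]
  tauto

theorem bothAtCenter_zero : bothAtCenter S 0 ω := by
  simp [bothAtCenter]

theorem bothAtCenter_congr {k : ℕ} {ω ω' : Ω} (h : ∀ i < k, S i ω = S i ω') :
    bothAtCenter S k ω ↔ bothAtCenter S k ω' := by
  have hfilter : ∀ b : Bool, {i ∈ range k | S i ω = b} = {i ∈ range k | S i ω' = b} :=
    fun b => filter_congr fun i hi => by rw [h i (mem_range.1 hi)]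
  rw [bothAtCenter, bothAtCenter, hfilter, hfilter]

theorem bothAtCenter.even {S : ℕ → Ω → Bool} {k : ℕ} {ω : Ω} (h : bothAtCenter S k ω) :
    Even k :=
  ((bothAtCenter_iff_even_count S ω k).1 h).1

theorem bothAtCenter_add_two {k : ℕ} (hk : Even k) :
    bothAtCenter S (k + 2) ω ↔ (bothAtCenter S k ω ↔ S k ω = S (k + 1) ω) := by
  simp only [bothAtCenter_iff_even_count, hk, hk.add even_two, true_and, Nat.count_succ,
    add_assoc]
  cases S k ω <;> cases S (k + 1) ω <;> simp [Nat.even_add_one]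

def pairPattern (a : ℕ) (P : ℕ → Prop) (l : ℕ) : Set Ω :=
  {ω | ∀ j < l, (S (a + 2 * j) ω = S (a + 2 * j + 1) ω ↔ P j)}

theorem sInf_return_eq_add_iff {a l : ℕ} (ha : bothAtCenter S a ω) (hl : 1 ≤ l) :
    sInf {k | a < k ∧ bothAtCenter S k ω} = a + 2 * l ↔
      ∀ j ≤ l, (bothAtCenter S (a + 2 * j) ω ↔ (j = 0 ∨ j = l)) := by
  rw [Nat.sInf_setOf_lt_and_eq_iff (by omega)]
  constructor
  · rintro ⟨hret, hbetween⟩ j hj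
    rcases Nat.eq_zero_or_pos j with rfl | hj0
    · simpa using ha
    rcases hj.eq_or_lt with rfl | hjl
    · simpa using hret
    exact iff_of_false (hbetween _ (by omega) (by omega)) (by omega)
  · intro h
    refine ⟨(h l le_rfl).2 (Or.inr rfl), fun k hak hkl hk => ?_⟩
    obtain ⟨j, rfl⟩ : ∃ j, k = a + 2 * j := by
      obtain ⟨x, hx⟩ := ha.even
      obtain ⟨y, hy⟩ := hk.even
      exact ⟨y - x, by omega⟩
    have := (h j (by omega)).1 hk
    omega

/-- The pattern `j = 0 ↔ j + 1 = l` reads: for `l = 1` the single pair agrees; for `l ≥ 2` the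
first and the last pair disagree and all pairs between them agree. -/
theorem sInf_return_eq_add_iff_mem_pairPattern {a l : ℕ} (ha : bothAtCenter S a ω) (hl : 1 ≤ l) :
    sInf {k | a < k ∧ bothAtCenter S k ω} = a + 2 * l ↔
      ω ∈ pairPattern S a (fun j => j = 0 ↔ j + 1 = l) l := by
  rw [sInf_return_eq_add_iff S ω ha hl, forall_le_iff_iff_forall_lt_succ (by simpa using ha)]
  refine forall₂_congr fun j hj => ?_
  have hF : ((j = 0 ∨ j = l) ↔ (j + 1 = 0 ∨ j + 1 = l)) ↔ (j = 0 ↔ j + 1 = l) := by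
    by_cases j = 0 <;> by_cases j + 1 = l <;> simp_all <;> omega
  rw [mul_add, mul_one, ← add_assoc, bothAtCenter_add_two S ω (ha.even.add (even_two_mul j)), hF]
  tauto

theorem pairPattern_determinedBy (a : ℕ) (P : ℕ → Prop) (l : ℕ) :
    DeterminedBy S (Ico a (a + 2 * l)) (pairPattern S a P l) := by
  intro ω ω' h hω j hj
  rw [← h (a + 2 * j) (by simp; omega), ← h (a + 2 * j + 1) (by simp; omega)]
  exact hω j hj

theorem setOf_forall_not_bothAtCenter_subset_pairPattern (m L : ℕ) :
    {ω | ∀ k, m < k → ¬bothAtCenter S k ω} ⊆ pairPattern S (2 * m + 2) (fun _ => True) L := by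
  intro ω hω j _
  have hstep := bothAtCenter_add_two S ω (k := 2 * m + 2 + 2 * j) ⟨m + 1 + j, by ring⟩
  have h1 := hω (2 * m + 2 + 2 * j) (by omega)
  have h2 := hω (2 * m + 2 + 2 * j + 2) (by omega)
  tauto

end Combinatorics

section FairCoins

variable {Ω : Type*} [MeasurableSpace Ω] {μ : Measure Ω} [IsProbabilityMeasure μ]
  {S : ℕ → Ω → Bool}

theorem measure_preimage_singleton_eq_half (hmeas : ∀ i, Measurable (S i))
    (hfair : ∀ i, μ (S i ⁻¹' {true}) = 1 / 2) (i : ℕ) (b : Bool) :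
    μ (S i ⁻¹' {b}) = 1 / 2 := by
  cases b
  · have hcompl : S i ⁻¹' {false} = (S i ⁻¹' {true})ᶜ := by ext; simp
    rw [hcompl, prob_compl_eq_one_sub (hmeas i (measurableSet_singleton _)), hfair, one_div,
      ENNReal.one_sub_inv_two]
  · exact hfair i

variable (hmeas : ∀ i, Measurable (S i)) (hindep : iIndepFun S μ)
  (hfair : ∀ i, μ (S i ⁻¹' {true}) = 1 / 2)
include hmeas hindep hfair

theorem measure_setOf_eq_eq_half {i j : ℕ} (hij : i ≠ j) :
    μ {ω | S i ω = S j ω} = 1 / 2 := by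
  have hsplit : {ω | S i ω = S j ω} =
      (S i ⁻¹' {true} ∩ S j ⁻¹' {true}) ∪ (S i ⁻¹' {false} ∩ S j ⁻¹' {false}) := by
    ext ω; cases h1 : S i ω <;> cases h2 : S j ω <;> simp [h1, h2]
  have hmeas_pair : ∀ b : Bool, μ (S i ⁻¹' {b} ∩ S j ⁻¹' {b}) = 1 / 2 * (1 / 2) := fun b => by
    rw [(hindep.indepFun hij).measure_inter_preimage_eq_mul _ _ (measurableSet_singleton b)
      (measurableSet_singleton b), measure_preimage_singleton_eq_half hmeas hfair,
      measure_preimage_singleton_eq_half hmeas hfair]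
  rw [hsplit, measure_union _ ((hmeas i (measurableSet_singleton _)).inter
      (hmeas j (measurableSet_singleton _))), hmeas_pair, hmeas_pair, ← add_mul, ENNReal.add_halves,
    one_mul]
  exact Disjoint.mono Set.inter_subset_left Set.inter_subset_left
    ((Set.disjoint_singleton.2 (by decide : true ≠ false)).preimage (S i))

theorem measure_setOf_eq_iff_eq_half {i j : ℕ} (hij : i ≠ j) (P : Prop) :
    μ {ω | S i ω = S j ω ↔ P} = 1 / 2 := by
  by_cases hP : P
  · simpa [hP] using measure_setOf_eq_eq_half hmeas hindep hfair hij
  · have hmeas_eq : MeasurableSet {ω | S i ω = S j ω} :=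
      measurableSet_eq_fun (hmeas i) (hmeas j)
    simp only [hP, iff_false]
    rw [← Set.compl_ofPred, prob_compl_eq_one_sub hmeas_eq,
      measure_setOf_eq_eq_half hmeas hindep hfair hij, one_div, ENNReal.one_sub_inv_two]

theorem measure_pairPattern (a : ℕ) (P : ℕ → Prop) (l : ℕ) :
    μ (pairPattern S a P l) = (1 / 2) ^ l := by
  induction l with
  | zero => simp [pairPattern]
  | succ l ih =>
    have hsplit : pairPattern S a P (l + 1) =
        pairPattern S a P l ∩ {ω | S (a + 2 * l) ω = S (a + 2 * l + 1) ω ↔ P l} := by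
      ext ω
      simp only [pairPattern, Set.mem_inter_iff, Set.mem_ofPred_eq, Nat.forall_lt_succ_right]
    have hlast : DeterminedBy S (Ico (a + 2 * l) (a + 2 * l + 2))
        {ω | S (a + 2 * l) ω = S (a + 2 * l + 1) ω ↔ P l} := by
      intro ω ω' h hω
      rwa [Set.mem_ofPred_eq, ← h (a + 2 * l) (by simp), ← h (a + 2 * l + 1) (by simp)]
    rw [hsplit, (pairPattern_determinedBy S a P l).measure_inter_eq_mul hmeas hindep
      (Finset.Ico_disjoint_Ico_consecutive _ _ _) hlast, ih,
      measure_setOf_eq_iff_eq_half hmeas hindep hfair (by omega), pow_succ]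

theorem ae_infinite_setOf_bothAtCenter : ∀ᵐ ω ∂μ, {k | bothAtCenter S k ω}.Infinite := by
  have hnull : ∀ m, μ {ω | ∀ k, m < k → ¬bothAtCenter S k ω} = 0 := fun m => by
    refine le_antisymm (ge_of_tendsto' (ENNReal.tendsto_pow_atTop_nhds_zero_of_lt_one
      (by norm_num : (1 / 2 : ℝ≥0∞) < 1)) fun L => ?_) bot_le
    exact (measure_mono (setOf_forall_not_bothAtCenter_subset_pairPattern S m L)).trans
      (measure_pairPattern hmeas hindep hfair _ _ L).le
  refine ae_iff.2 (measure_mono_null (fun ω hω => ?_) (measure_iUnion_null hnull))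
  obtain ⟨m, hm⟩ := (Set.not_infinite.1 hω).bddAbove
  exact Set.mem_iUnion.2 ⟨m, fun k hmk hk => (hm hk).not_gt hmk⟩

end FairCoins

section MeetingTime

variable {Ω : Type*} (S : ℕ → Ω → Bool)

theorem meetingTime_succ (n : ℕ) (ω : Ω) :
    meetingTime S (n + 1) ω = sInf {k | meetingTime S n ω < k ∧ bothAtCenter S k ω} :=
  rfl

theorem bothAtCenter_meetingTime (n : ℕ) (ω : Ω) : bothAtCenter S (meetingTime S n ω) ω := by
  cases n with
  | zero => exact bothAtCenter_zero S ω
  | succ n =>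
    rw [meetingTime_succ]
    rcases Set.eq_empty_or_nonempty {k | meetingTime S n ω < k ∧ bothAtCenter S k ω} with h | h
    · rw [h, Nat.sInf_empty]
      exact bothAtCenter_zero S ω
    · exact (Nat.sInf_mem h).2

theorem meetingTime_succ_eq_add_iff {l : ℕ} (hl : 1 ≤ l) (n : ℕ) (ω : Ω) :
    meetingTime S (n + 1) ω = meetingTime S n ω + 2 * l ↔
      ω ∈ pairPattern S (meetingTime S n ω) (fun j => j = 0 ↔ j + 1 = l) l :=
  sInf_return_eq_add_iff_mem_pairPattern S ω (bothAtCenter_meetingTime S n ω) hl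

theorem meetingTime_eq_nth {ω : Ω} (h : {k | bothAtCenter S k ω}.Infinite) (n : ℕ) :
    meetingTime S n ω = Nat.nth (bothAtCenter S · ω) n := by
  induction n with
  | zero => exact (Nat.nth_zero_of_zero (bothAtCenter_zero S ω)).symm
  | succ n ih =>
    rw [meetingTime_succ, ih]
    refine IsLeast.csInf_eq ⟨⟨(Nat.nth_lt_nth h).2 n.lt_succ_self, Nat.nth_mem_of_infinite h _⟩,
      fun k ⟨hnk, hk⟩ => ?_⟩
    exact not_lt.1 fun hlt => (Nat.le_nth_of_lt_nth_succ hlt hk).not_gt hnk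

open Classical in
/-- Off the null set where the walkers return only finitely often, this is the event
`meetingTime S n = a`; unlike that event, it depends only on the steps before `a`. -/
def nthReturnEvent (n a : ℕ) : Set Ω :=
  {ω | bothAtCenter S a ω ∧ Nat.count (bothAtCenter S · ω) a = n}

theorem meetingTime_eq_iff_mem_nthReturnEvent {ω : Ω} (h : {k | bothAtCenter S k ω}.Infinite)
    (n a : ℕ) : meetingTime S n ω = a ↔ ω ∈ nthReturnEvent S n a := by
  classical
  rw [meetingTime_eq_nth S h]
  constructor
  · rintro rfl
    exact ⟨Nat.nth_mem_of_infinite h n, Nat.count_nth_of_infinite h n⟩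
  · rintro ⟨ha, hcount⟩
    rw [← hcount]
    exact Nat.nth_count ha

theorem bothAtCenter_determinedBy (k : ℕ) : DeterminedBy S (range k) {ω | bothAtCenter S k ω} :=
  fun _ _ h => (bothAtCenter_congr S fun i hi => h i (mem_range.2 hi)).1

theorem nthReturnEvent_determinedBy (n a : ℕ) :
    DeterminedBy S (range a) (nthReturnEvent S n a) := by
  classical
  rintro ω ω' h ⟨ha, hcount⟩
  have hcongr : ∀ k ≤ a, (bothAtCenter S k ω ↔ bothAtCenter S k ω') := fun k hk =>
    bothAtCenter_congr S fun i hi => h i (mem_range.2 (by omega))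
  refine ⟨(hcongr a le_rfl).1 ha, ?_⟩
  rw [← hcount, Nat.count_eq_card_filter_range, Nat.count_eq_card_filter_range]
  exact congrArg card (filter_congr fun k hk => (hcongr k (mem_range.1 hk).le).symm)

theorem measurable_meetingTime [MeasurableSpace Ω] (hmeas : ∀ i, Measurable (S i)) (n : ℕ) :
    Measurable (meetingTime S n) := by
  induction n with
  | zero => exact measurable_const
  | succ n ih =>
    have hnext : Measurable fun p : Ω × ℕ => sInf {k | p.2 < k ∧ bothAtCenter S k p.1} :=
      measurable_from_prod_countable_left fun a => measurable_sInf_setOf fun k =>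
        (MeasurableSet.const (a < k)).inter ((bothAtCenter_determinedBy S k).measurableSet hmeas)
    exact hnext.comp (measurable_id.prodMk ih)

theorem measurable_meetingTime_succ_sub [MeasurableSpace Ω] (hmeas : ∀ i, Measurable (S i))
    (n : ℕ) : Measurable fun ω => meetingTime S (n + 1) ω - meetingTime S n ω :=
  (measurable_meetingTime S hmeas (n + 1)).sub (measurable_meetingTime S hmeas n)

end MeetingTime

section Distribution

variable {Ω : Type*} [MeasurableSpace Ω] {μ : Measure Ω} [IsProbabilityMeasure μ]
  {S : ℕ → Ω → Bool} (hmeas : ∀ i, Measurable (S i)) (hindep : iIndepFun S μ)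
  (hfair : ∀ i, μ (S i ⁻¹' {true}) = 1 / 2)
include hmeas hindep hfair

theorem measure_meetingTime_preimage_inter {n a b : ℕ} {A : Set Ω}
    (hA : DeterminedBy S (Ico a b) A) :
    μ (meetingTime S n ⁻¹' {a} ∩ A) = μ (meetingTime S n ⁻¹' {a}) * μ A := by
  have hae : meetingTime S n ⁻¹' {a} =ᵐ[μ] nthReturnEvent S n a := by
    filter_upwards [ae_infinite_setOf_bothAtCenter hmeas hindep hfair] with ω hω
    exact propext (meetingTime_eq_iff_mem_nthReturnEvent S hω n a)
  rw [measure_congr (hae.inter (ae_eq_refl A)), measure_congr hae,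
    (nthReturnEvent_determinedBy S n a).measure_inter_eq_mul hmeas hindep
      (range_eq_Ico a ▸ Ico_disjoint_Ico_consecutive 0 a b) hA]

theorem measure_meetingTime_succ_eq_add (n : ℕ) {l : ℕ} (hl : 1 ≤ l) :
    μ {ω | meetingTime S (n + 1) ω = meetingTime S n ω + 2 * l} = (1 / 2) ^ l := by
  have hset : {ω | meetingTime S (n + 1) ω = meetingTime S n ω + 2 * l} =
      {ω | ω ∈ pairPattern S (meetingTime S n ω) (fun j => j = 0 ↔ j + 1 = l) l} :=
    Set.ext fun ω => meetingTime_succ_eq_add_iff S hl n ω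
  rw [hset]
  refine measure_setOf_mem_of_fiber (μ := μ) (measurable_meetingTime S hmeas n)
    (fun a => (pairPattern_determinedBy S a _ l).measurableSet hmeas) fun a => ?_
  rw [measure_meetingTime_preimage_inter hmeas hindep hfair (pairPattern_determinedBy S a _ l),
    measure_pairPattern hmeas hindep hfair]

theorem lintegral_meetingTime_succ_sub (n : ℕ) :
    ∫⁻ ω, ((meetingTime S (n + 1) ω - meetingTime S n ω : ℕ) : ℝ≥0∞) ∂μ = 4 := by
  rw [lintegral_natCast_eq_tsum (measurable_meetingTime_succ_sub S hmeas n),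
    ← tsum_even_add_odd ENNReal.summable ENNReal.summable]
  set D : Ω → ℕ := fun ω => meetingTime S (n + 1) ω - meetingTime S n ω with hD
  have hodd : ∀ k, D ⁻¹' {2 * k + 1} = ∅ := fun k => by
    refine Set.eq_empty_of_forall_notMem fun ω hω => ?_
    obtain ⟨x, hx⟩ := (bothAtCenter_meetingTime S n ω).even
    obtain ⟨y, hy⟩ := (bothAtCenter_meetingTime S (n + 1) ω).even
    simp only [Set.mem_preimage, Set.mem_singleton_iff, hD] at hω
    omega
  have heven : ∀ l : ℕ, (2 * l : ℝ≥0∞) * μ (D ⁻¹' {2 * l}) = 2 * l * (1 / 2) ^ l := fun l => by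
    rcases Nat.eq_zero_or_pos l with rfl | hl
    · simp
    have hfiber : D ⁻¹' {2 * l} = {ω | meetingTime S (n + 1) ω = meetingTime S n ω + 2 * l} := by
      ext ω
      simp only [Set.mem_preimage, Set.mem_singleton_iff, Set.mem_ofPred_eq, hD]
      omega
    rw [hfiber, measure_meetingTime_succ_eq_add hmeas hindep hfair n hl]
  simp only [hodd, measure_empty, mul_zero, tsum_zero, add_zero, Nat.cast_mul, Nat.cast_ofNat,
    heven]
  exact ENNReal.tsum_two_mul_mul_half_pow

theorem integral_meetingTime_succ_sub (n : ℕ) :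
    ∫ ω, ((meetingTime S (n + 1) ω : ℝ) - (meetingTime S n ω : ℝ)) ∂μ = 4 := by
  have hcast : (fun ω => (meetingTime S (n + 1) ω : ℝ) - (meetingTime S n ω : ℝ)) =ᵐ[μ]
      fun ω => ((meetingTime S (n + 1) ω - meetingTime S n ω : ℕ) : ℝ) := by
    filter_upwards [ae_infinite_setOf_bothAtCenter hmeas hindep hfair] with ω hω
    have hle : meetingTime S n ω ≤ meetingTime S (n + 1) ω := by
      rw [meetingTime_eq_nth S hω, meetingTime_eq_nth S hω]
      exact ((Nat.nth_lt_nth hω).2 n.lt_succ_self).le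
    rw [Nat.cast_sub hle]
  rw [integral_congr_ae hcast, integral_eq_lintegral_of_nonneg_ae
      (ae_of_all _ fun _ => Nat.cast_nonneg _)
      (measurable_from_nat.comp (measurable_meetingTime_succ_sub S hmeas n)).aestronglyMeasurable]
  simp_rw [ENNReal.ofReal_natCast]
  rw [lintegral_meetingTime_succ_sub hmeas hindep hfair]
  norm_num

end Distribution

/-- If at each step one of the two walkers is chosen uniformly at random
(independently across steps) to move, then the successive meeting times at the center
satisfy `P[τ_{n+1} - τ_n = 2l] = 2^{-l}` for all `l ≥ 1` and `E[τ_{n+1} - τ_n] = 4`. -/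
theorem two_walker_meeting_time_distribution
    {Ω : Type*} [MeasurableSpace Ω] (μ : Measure Ω) [IsProbabilityMeasure μ]
    (S : ℕ → Ω → Bool) (hmeas : ∀ i, Measurable (S i))
    (hindep : iIndepFun S μ)
    (hfair : ∀ i, μ (S i ⁻¹' {true}) = 1 / 2) :
    (∀ n l : ℕ, 1 ≤ l →
      μ {ω | meetingTime S (n + 1) ω = meetingTime S n ω + 2 * l} =
        (1 / 2 : ENNReal) ^ l) ∧
    (∀ n : ℕ,
      (∫ ω, ((meetingTime S (n + 1) ω : ℝ) - (meetingTime S n ω : ℝ)) ∂μ) = 4) :=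
  ⟨fun n _ hl => measure_meetingTime_succ_eq_add hmeas hindep hfair n hl,
    integral_meetingTime_succ_sub hmeas hindep hfair⟩
end

section
/- In the two-walker randomly-selected edge-reinforced walk on {-1,0,1} with current edge weights a (left) and b (right) when both walkers are at the center, let E_{a,b,l} be the expectation of the new left-weight fraction times the indicator that the walkers need exactly 2l steps to meet again at the center, and let q_{a,b,l} be the probability that the last walker returning to the center comes from the left node and the walkers need exactly 2l steps. Then E_{a,b,l} = q_{a,b,l} = 2^{-l} · a/(a+b) for all l ≥ 1. -/
/-!
At odd times exactly one walker is at the center (parity of `X + Y + n`). Whatever happened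
before, the walkers then meet at the next step with probability `1/2`: the walker off the center
has to be chosen, and it surely returns. Let `β_j` be the probability of no meeting before time
`2j+2` with the off-center walker at `-1` at time `2j+1`, and `α_j` the expected left weight on
the same no-meeting event. Following the chain through two more steps (the center walker leaves,
then one of the two off-center walkers returns) gives `β_{j+1} = (α_j / (a+b+2j+1) + β_j) / 4`
and `α_{j+1} = α_j / 2 + α_j / (2(a+b+2j+1)) + β_{j+1}`, so by induction
`α_j = (a+b+2j+1) β_j` and `β_j = 2^{-j} a/(a+b)`. At a meeting at time `2j+2`, the left weight
gains one exactly when the returning walker comes from the left. Hence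
`q = β_j / 2` and `E = (α_j + β_j) / (2(a+b+2j+2)) = β_j / 2`.
-/

open MeasureTheory

section CondExp

variable {Ω : Type*} [mΩ : MeasurableSpace Ω] {μ : Measure Ω} [IsFiniteMeasure μ]
  {m : MeasurableSpace Ω}

theorem setIntegral_inter_eq_setIntegral_mul_of_condExp_indicator (hm : m ≤ mΩ)
    {A B : Set Ω} (hA : MeasurableSet[mΩ] A) (hB : MeasurableSet[m] B) {f g : Ω → ℝ}
    (hf : StronglyMeasurable[m] f) (hfi : Integrable f μ)
    (hg : μ[A.indicator (fun _ => (1 : ℝ)) | m] =ᵐ[μ] g) :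
    ∫ ω in B ∩ A, f ω ∂μ = ∫ ω in B, f ω * g ω ∂μ := by
  have hfA : f * A.indicator (fun _ => (1 : ℝ)) = A.indicator f := by
    ext ω; by_cases hω : ω ∈ A <;> simp [hω]
  have hpull : μ[f * A.indicator (fun _ => (1 : ℝ)) | m] =ᵐ[μ] fun ω => f ω * g ω := by
    have hint : Integrable (f * A.indicator (fun _ => (1 : ℝ))) μ := hfA ▸ hfi.indicator hA
    filter_upwards [condExp_mul_of_stronglyMeasurable_left hf hint
      ((integrable_const 1).indicator hA), hg] with ω hω hgω
    rw [hω, Pi.mul_apply, hgω]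
  calc ∫ ω in B ∩ A, f ω ∂μ = ∫ ω in B, (f * A.indicator (fun _ => (1 : ℝ))) ω ∂μ := by
        rw [hfA, setIntegral_indicator hA]
    _ = ∫ ω in B, (μ[f * A.indicator (fun _ => (1 : ℝ)) | m]) ω ∂μ :=
        (setIntegral_condExp hm (hfA ▸ hfi.indicator hA) hB).symm
    _ = ∫ ω in B, f ω * g ω ∂μ := setIntegral_congr_ae (hm B hB) (hpull.mono fun _ h _ => h)

end CondExp

theorem Nat.sInf_setOf_eq_iff {p : ℕ → Prop} {N : ℕ} (hN : N ≠ 0) :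
    sInf {k | p k} = N ↔ p N ∧ ∀ k < N, ¬p k := by
  constructor
  · rintro rfl
    exact ⟨Nat.sInf_mem (Nat.nonempty_of_pos_sInf (Nat.pos_of_ne_zero hN)),
      fun k hk => Nat.notMem_of_lt_sInf hk⟩
  · rintro ⟨hpN, hlt⟩
    exact le_antisymm (Nat.sInf_le hpN) (not_lt.1 fun hlt' => hlt _ hlt' (Nat.sInf_mem ⟨N, hpN⟩))

section Walker

variable {Ω : Type*} [mΩ : MeasurableSpace Ω] {μ : Measure Ω} [IsFiniteMeasure μ]
  {F : Filtration ℕ mΩ} {X : ℕ → Ω → ℤ} {wl wr : ℕ → Ω → ℝ}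

structure WalkerLaw (μ : Measure Ω) (F : Filtration ℕ mΩ) (X : ℕ → Ω → ℤ)
    (wl wr : ℕ → Ω → ℝ) : Prop where
  up : ∀ n,
    μ[Set.indicator {ω | X (n + 1) ω = X n ω + 1} (fun _ => (1 : ℝ)) | F n]
      =ᵐ[μ] fun ω => (1 / 2) *
        (if X n ω = 0 then wr n ω / (wl n ω + wr n ω)
         else if X n ω = -1 then 1 else 0)
  down : ∀ n,
    μ[Set.indicator {ω | X (n + 1) ω = X n ω - 1} (fun _ => (1 : ℝ)) | F n]
      =ᵐ[μ] fun ω => (1 / 2) *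
        (if X n ω = 0 then wl n ω / (wl n ω + wr n ω)
         else if X n ω = 1 then 1 else 0)

theorem measurableSet_succ_eq_comp (hXa : Adapted F X) (n : ℕ) (g : ℤ → ℤ) :
    MeasurableSet {ω | X (n + 1) ω = g (X n ω)} :=
  measurableSet_eq_fun ((hXa (n + 1)).mono (F.le _) le_rfl)
    (Measurable.of_discrete.comp ((hXa n).mono (F.le _) le_rfl))

namespace WalkerLaw

variable {n : ℕ} {B : Set Ω}

theorem setIntegral_inter_succ_eq_zero (hX : WalkerLaw μ F X wl wr) (hXa : Adapted F X)
    (hrange : ∀ ω, X (n + 1) ω ∈ Set.Icc (-1 : ℤ) 1) (hB : MeasurableSet[F n] B)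
    (hBX : ∀ ω ∈ B, X n ω = 1 ∨ X n ω = -1) {f : Ω → ℝ} (hf : StronglyMeasurable[F n] f)
    (hfi : Integrable f μ) :
    ∫ ω in B ∩ {ω | X (n + 1) ω = 0}, f ω ∂μ = (∫ ω in B, f ω ∂μ) / 2 := by
  set up := {ω | X (n + 1) ω = X n ω + 1}
  set down := {ω | X (n + 1) ω = X n ω - 1}
  have hup : MeasurableSet up := measurableSet_succ_eq_comp hXa n (· + 1)
  have hdown : MeasurableSet down := measurableSet_succ_eq_comp hXa n (· - 1)
  have hdisj : Disjoint up down := Set.disjoint_left.2 fun ω h1 h2 => by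
    simp only [up, down, Set.mem_ofPred_eq] at h1 h2; omega
  have hcond : μ[(up ∪ down).indicator (fun _ => (1 : ℝ)) | F n] =ᵐ[μ] fun ω =>
      (1 / 2) * (if X n ω = 0 then wr n ω / (wl n ω + wr n ω) else if X n ω = -1 then 1 else 0) +
      (1 / 2) * (if X n ω = 0 then wl n ω / (wl n ω + wr n ω) else if X n ω = 1 then 1 else 0) := by
    rw [Set.indicator_union_of_disjoint hdisj]
    filter_upwards [condExp_add ((integrable_const (1 : ℝ)).indicator hup)
      ((integrable_const (1 : ℝ)).indicator hdown) (F n), hX.up n, hX.down n] with ω h h1 h2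
    exact h.trans (by rw [Pi.add_apply, h1, h2])
  have hset : B ∩ {ω | X (n + 1) ω = 0} = B ∩ (up ∪ down) := by
    ext ω
    obtain ⟨h1, h2⟩ := hrange ω
    simp only [Set.mem_inter_iff, Set.mem_union, Set.mem_ofPred_eq, up, down]
    constructor
    · rintro ⟨hω, h⟩; have := hBX ω hω; exact ⟨hω, by omega⟩
    · rintro ⟨hω, h⟩; have := hBX ω hω; exact ⟨hω, by omega⟩
  rw [hset, setIntegral_inter_eq_setIntegral_mul_of_condExp_indicator (F.le n)
    (hup.union hdown) hB hf hfi hcond, ← integral_div]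
  refine setIntegral_congr_fun (F.le n B hB) fun ω hω => ?_
  rcases hBX ω hω with h | h <;> norm_num [h, div_eq_mul_inv]

theorem measureReal_inter_succ_eq_zero (hX : WalkerLaw μ F X wl wr) (hXa : Adapted F X)
    (hrange : ∀ ω, X (n + 1) ω ∈ Set.Icc (-1 : ℤ) 1) (hB : MeasurableSet[F n] B)
    (hBX : ∀ ω ∈ B, X n ω = 1 ∨ X n ω = -1) :
    μ.real (B ∩ {ω | X (n + 1) ω = 0}) = μ.real B / 2 := by
  simpa only [setIntegral_one_eq_measureReal] using
    hX.setIntegral_inter_succ_eq_zero hXa hrange hB hBX stronglyMeasurable_const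
      (integrable_const 1)

theorem measureReal_inter_succ_eq_neg_one (hX : WalkerLaw μ F X wl wr) (hXa : Adapted F X)
    (hB : MeasurableSet[F n] B) (hBX : ∀ ω ∈ B, X n ω = 0) :
    μ.real (B ∩ {ω | X (n + 1) ω = -1}) =
      (∫ ω in B, wl n ω / (wl n ω + wr n ω) ∂μ) / 2 := by
  have hdown : MeasurableSet {ω | X (n + 1) ω = X n ω - 1} :=
    measurableSet_succ_eq_comp hXa n (· - 1)
  have hset : B ∩ {ω | X (n + 1) ω = -1} = B ∩ {ω | X (n + 1) ω = X n ω - 1} := by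
    ext ω
    simp only [Set.mem_inter_iff, Set.mem_ofPred_eq]
    constructor <;> rintro ⟨hω, h⟩ <;> exact ⟨hω, by have := hBX ω hω; omega⟩
  rw [← setIntegral_one_eq_measureReal, hset,
    setIntegral_inter_eq_setIntegral_mul_of_condExp_indicator (F.le n) hdown hB
      stronglyMeasurable_const (integrable_const 1) (hX.down n), ← integral_div]
  refine setIntegral_congr_fun (F.le n B hB) fun ω hω => ?_
  simp only [hBX ω hω, if_true]
  ring

end WalkerLaw

end Walker

section Events

variable {Ω : Type*} {X Y : ℕ → Ω → ℤ} {n : ℕ} {B : Set Ω}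

def meetAt (X Y : ℕ → Ω → ℤ) (n : ℕ) : Set Ω := {ω | X n ω = 0 ∧ Y n ω = 0}

def noMeetBefore (X Y : ℕ → Ω → ℤ) (N : ℕ) : Set Ω :=
  {ω | ∀ k, 1 ≤ k → k < N → ¬(X k ω = 0 ∧ Y k ω = 0)}

def someAtLeft (X Y : ℕ → Ω → ℤ) (n : ℕ) : Set Ω := {ω | X n ω = -1 ∨ Y n ω = -1}

theorem meetAt_comm (X Y : ℕ → Ω → ℤ) (n : ℕ) : meetAt Y X n = meetAt X Y n := by
  ext; simp only [meetAt, Set.mem_ofPred_eq, and_comm]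

theorem someAtLeft_comm (X Y : ℕ → Ω → ℤ) (n : ℕ) : someAtLeft Y X n = someAtLeft X Y n := by
  ext; simp only [someAtLeft, Set.mem_ofPred_eq, or_comm]

theorem inter_someAtLeft_inter_fst_eq_zero :
    B ∩ someAtLeft X Y n ∩ {ω | X n ω = 0} = B ∩ {ω | X n ω = 0} ∩ {ω | Y n ω = -1} := by
  rw [Set.inter_assoc, Set.inter_assoc]
  congr 1
  ext ω
  simp only [someAtLeft, Set.mem_inter_iff, Set.mem_ofPred_eq]
  omega

theorem setOf_sInf_meet_eq (X Y : ℕ → Ω → ℤ) {N : ℕ} (hN : N ≠ 0) :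
    {ω | sInf {k | 1 ≤ k ∧ X k ω = 0 ∧ Y k ω = 0} = N} = noMeetBefore X Y N ∩ meetAt X Y N := by
  ext ω
  rw [Set.mem_ofPred_eq, Nat.sInf_setOf_eq_iff hN]
  simp only [noMeetBefore, meetAt, Set.mem_inter_iff, Set.mem_ofPred_eq]
  constructor
  · rintro ⟨⟨-, hmeet⟩, hbefore⟩
    exact ⟨fun k hk hkN => fun hk' => hbefore k hkN ⟨hk, hk'⟩, hmeet⟩
  · rintro ⟨hbefore, hmeet⟩
    exact ⟨⟨Nat.one_le_iff_ne_zero.2 hN, hmeet⟩, fun k hkN hk => hbefore k hk.1 hkN hk.2⟩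

end Events

section Urn

variable {Ω : Type*} [mΩ : MeasurableSpace Ω]

/-- The model of the main theorem, bundled so that every statement about the pair of walkers
`(X, Y)` also applies to `(Y, X)` through `TwoWalkerUrn.swap`. -/
structure TwoWalkerUrn (μ : Measure Ω) (F : Filtration ℕ mΩ) (X Y : ℕ → Ω → ℤ)
    (wl wr : ℕ → Ω → ℝ) (a b : ℝ) : Prop where
  left_pos : 0 < a
  right_pos : 0 < b
  adapted_fst : Adapted F X
  adapted_snd : Adapted F Y
  adapted_wl : Adapted F wl
  fst_zero : X 0 = fun _ => 0
  snd_zero : Y 0 = fun _ => 0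
  wl_zero : wl 0 = fun _ => a
  wr_zero : wr 0 = fun _ => b
  fst_mem : ∀ n ω, X n ω ∈ Set.Icc (-1 : ℤ) 1
  snd_mem : ∀ n ω, Y n ω ∈ Set.Icc (-1 : ℤ) 1
  move : ∀ n ω, (Y (n + 1) ω = Y n ω ∧ |X (n + 1) ω - X n ω| = 1) ∨
    (X (n + 1) ω = X n ω ∧ |Y (n + 1) ω - Y n ω| = 1)
  wl_succ : ∀ n ω, wl (n + 1) ω = wl n ω +
    (if (X n ω = -1 ∧ X (n + 1) ω = 0) ∨ (X n ω = 0 ∧ X (n + 1) ω = -1) ∨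
        (Y n ω = -1 ∧ Y (n + 1) ω = 0) ∨ (Y n ω = 0 ∧ Y (n + 1) ω = -1)
      then 1 else 0)
  wr_succ : ∀ n ω, wr (n + 1) ω = wr n ω +
    (if (X n ω = 1 ∧ X (n + 1) ω = 0) ∨ (X n ω = 0 ∧ X (n + 1) ω = 1) ∨
        (Y n ω = 1 ∧ Y (n + 1) ω = 0) ∨ (Y n ω = 0 ∧ Y (n + 1) ω = 1)
      then 1 else 0)
  law_fst : WalkerLaw μ F X wl wr
  law_snd : WalkerLaw μ F Y wl wr

namespace TwoWalkerUrn

variable {μ : Measure Ω} {F : Filtration ℕ mΩ} {X Y : ℕ → Ω → ℤ} {wl wr : ℕ → Ω → ℝ} {a b : ℝ}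
  {n : ℕ} {B S T : Set Ω} {f : Ω → ℝ}

theorem swap (h : TwoWalkerUrn μ F X Y wl wr a b) : TwoWalkerUrn μ F Y X wl wr a b where
  __ := h
  adapted_fst := h.adapted_snd
  adapted_snd := h.adapted_fst
  fst_zero := h.snd_zero
  snd_zero := h.fst_zero
  fst_mem := h.snd_mem
  snd_mem := h.fst_mem
  move n ω := (h.move n ω).symm
  wl_succ n ω := by rw [h.wl_succ]; congr 1; exact if_congr (by tauto) rfl rfl
  wr_succ n ω := by rw [h.wr_succ]; congr 1; exact if_congr (by tauto) rfl rfl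
  law_fst := h.law_snd
  law_snd := h.law_fst

/-- Everything `omega` needs to know about one step of the walkers. -/
theorem step_spec (h : TwoWalkerUrn μ F X Y wl wr a b) (n : ℕ) (ω : Ω) :
    (-1 ≤ X n ω ∧ X n ω ≤ 1 ∧ -1 ≤ Y n ω ∧ Y n ω ≤ 1) ∧
    (-1 ≤ X (n + 1) ω ∧ X (n + 1) ω ≤ 1 ∧ -1 ≤ Y (n + 1) ω ∧ Y (n + 1) ω ≤ 1) ∧
    ((Y (n + 1) ω = Y n ω ∧ (X (n + 1) ω = X n ω + 1 ∨ X (n + 1) ω = X n ω - 1)) ∨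
      (X (n + 1) ω = X n ω ∧ (Y (n + 1) ω = Y n ω + 1 ∨ Y (n + 1) ω = Y n ω - 1))) ∧
    2 ∣ X n ω + Y n ω + n := by
  have hX k := Set.mem_Icc.1 (h.fst_mem k ω)
  have hY k := Set.mem_Icc.1 (h.snd_mem k ω)
  have habs {x y : ℤ} (hxy : |x - y| = 1) : x = y + 1 ∨ x = y - 1 := by
    rcases abs_eq (zero_le_one' ℤ) |>.1 hxy with h | h <;> omega
  have hstep k := (h.move k ω).imp (And.imp_right habs) (And.imp_right habs)
  refine ⟨⟨(hX n).1, (hX n).2, (hY n).1, (hY n).2⟩,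
    ⟨(hX (n + 1)).1, (hX (n + 1)).2, (hY (n + 1)).1, (hY (n + 1)).2⟩, hstep n, ?_⟩
  induction n with
  | zero => simp [h.fst_zero, h.snd_zero]
  | succ k ih => have := hstep k; push_cast; omega

theorem wl_add_wr (h : TwoWalkerUrn μ F X Y wl wr a b) (n : ℕ) (ω : Ω) :
    wl n ω + wr n ω = a + b + n := by
  induction n with
  | zero => simp [h.wl_zero, h.wr_zero]
  | succ n ih =>
    have := h.step_spec n ω
    rw [h.wl_succ, h.wr_succ]
    split_ifs <;> first | omega | (push_cast; linarith)

theorem wl_mem_Icc (h : TwoWalkerUrn μ F X Y wl wr a b) (n : ℕ) (ω : Ω) :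
    wl n ω ∈ Set.Icc a (a + n) := by
  induction n with
  | zero => simp [h.wl_zero]
  | succ n ih =>
    obtain ⟨h1, h2⟩ := ih
    rw [h.wl_succ, Set.mem_Icc]
    push_cast
    split_ifs <;> constructor <;> linarith

theorem snd_eq_zero_iff_of_odd (h : TwoWalkerUrn μ F X Y wl wr a b) (hn : Odd n) (ω : Ω) :
    Y n ω = 0 ↔ X n ω ≠ 0 := by
  obtain ⟨j, rfl⟩ := hn
  have := h.step_spec (2 * j + 1) ω
  push_cast at this
  omega

theorem center_of_mem_inter_of_odd (h : TwoWalkerUrn μ F X Y wl wr a b) (hn : Odd n) {ω : Ω}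
    (hω : ω ∈ B ∩ {ω | X n ω = 0}) : X n ω = 0 ∧ Y n ω ≠ 0 :=
  ⟨hω.2, (h.swap.snd_eq_zero_iff_of_odd hn ω).1 hω.2⟩

theorem noMeetBefore_two (h : TwoWalkerUrn μ F X Y wl wr a b) :
    noMeetBefore X Y 2 = Set.univ :=
  Set.eq_univ_of_forall fun ω k hk hk2 hmeet => by
    obtain rfl : k = 1 := by omega
    exact (h.snd_eq_zero_iff_of_odd odd_one ω).1 hmeet.2 hmeet.1

theorem noMeetBefore_add_three_of_odd (h : TwoWalkerUrn μ F X Y wl wr a b) (hn : Odd n) :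
    noMeetBefore X Y (n + 3) = noMeetBefore X Y (n + 1) \ meetAt X Y (n + 1) := by
  ext ω
  simp only [noMeetBefore, meetAt, Set.mem_sdiff, Set.mem_ofPred_eq]
  constructor
  · intro hbefore
    exact ⟨fun k hk hkn => hbefore k hk (by omega), hbefore (n + 1) (by omega) (by omega)⟩
  · rintro ⟨hbefore, hnot⟩ k hk hkn hmeet
    rcases (by omega : k < n + 1 ∨ k = n + 1 ∨ k = n + 2) with hk' | rfl | rfl
    · exact hbefore k hk hk' hmeet
    · exact hnot hmeet
    · exact (h.snd_eq_zero_iff_of_odd (hn.add_even even_two) ω).1 hmeet.2 hmeet.1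

theorem outside_of_mem_diff_meetAt (h : TwoWalkerUrn μ F X Y wl wr a b)
    (hBX : ∀ ω ∈ B, X n ω = 0 ∧ Y n ω ≠ 0) {ω : Ω} (hω : ω ∈ B \ meetAt X Y (n + 1)) :
    X (n + 1) ω ≠ 0 ∧ Y (n + 1) ω ≠ 0 := by
  have := hBX ω hω.1
  have := h.step_spec n ω
  have := hω.2
  simp only [meetAt, Set.mem_ofPred_eq] at this
  omega

theorem measurableSet_fst_eq (h : TwoWalkerUrn μ F X Y wl wr a b) (n : ℕ) (c : ℤ) :
    MeasurableSet[F n] {ω | X n ω = c} :=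
  h.adapted_fst n (measurableSet_singleton c)

theorem measurableSet_meetAt (h : TwoWalkerUrn μ F X Y wl wr a b) (n : ℕ) :
    MeasurableSet[F n] (meetAt X Y n) :=
  (h.measurableSet_fst_eq n 0).inter (h.swap.measurableSet_fst_eq n 0)

theorem measurableSet_someAtLeft (h : TwoWalkerUrn μ F X Y wl wr a b) (n : ℕ) :
    MeasurableSet[F n] (someAtLeft X Y n) :=
  (h.measurableSet_fst_eq n (-1)).union (h.swap.measurableSet_fst_eq n (-1))

theorem measurableSet_noMeetBefore (h : TwoWalkerUrn μ F X Y wl wr a b) {N n : ℕ}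
    (hN : N ≤ n + 1) : MeasurableSet[F n] (noMeetBefore X Y N) := by
  have hset : noMeetBefore X Y N = ⋂ k ∈ Set.Ico 1 N, (meetAt X Y k)ᶜ := by
    ext; simp [noMeetBefore, meetAt]
  rw [hset]
  refine .biInter (Set.to_countable _) fun k hk => ?_
  exact F.mono (by grind) _ (h.measurableSet_meetAt k).compl

theorem measurableSet_diff_meetAt (h : TwoWalkerUrn μ F X Y wl wr a b)
    (hB : MeasurableSet[F n] B) : MeasurableSet[F (n + 1)] (B \ meetAt X Y (n + 1)) :=
  (F.mono n.le_succ _ hB).diff (h.measurableSet_meetAt (n + 1))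

theorem setIntegral_eq_add_of_odd (h : TwoWalkerUrn μ F X Y wl wr a b) (hn : Odd n)
    (hfi : IntegrableOn f B μ) :
    ∫ ω in B, f ω ∂μ =
      ∫ ω in B ∩ {ω | X n ω = 0}, f ω ∂μ + ∫ ω in B ∩ {ω | Y n ω = 0}, f ω ∂μ := by
  have hset : B ∩ {ω | Y n ω = 0} = B \ {ω | X n ω = 0} := by
    ext ω
    exact and_congr_right fun _ => h.snd_eq_zero_iff_of_odd hn ω
  rw [hset, integral_inter_add_sdiff (F.le _ _ (h.measurableSet_fst_eq _ 0)) hfi]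

section FiniteMeasure

variable [IsFiniteMeasure μ]

theorem integrable_wl (h : TwoWalkerUrn μ F X Y wl wr a b) (n : ℕ) :
    Integrable (wl n) μ :=
  .of_bound ((h.adapted_wl n).mono (F.le n) le_rfl).aestronglyMeasurable (a + n) <|
    .of_forall fun ω => by
      obtain ⟨h1, h2⟩ := h.wl_mem_Icc n ω
      rw [Real.norm_eq_abs, abs_le]
      constructor <;> linarith [h.left_pos]

theorem measureReal_eq_add_of_odd (h : TwoWalkerUrn μ F X Y wl wr a b) (hn : Odd n)
    (B : Set Ω) :
    μ.real B = μ.real (B ∩ {ω | X n ω = 0}) + μ.real (B ∩ {ω | Y n ω = 0}) := by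
  simpa only [setIntegral_one_eq_measureReal] using
    h.setIntegral_eq_add_of_odd hn (integrable_const (1 : ℝ)).integrableOn

theorem measureReal_inter_someAtLeft_of_odd (h : TwoWalkerUrn μ F X Y wl wr a b)
    (hn : Odd n) (B : Set Ω) :
    μ.real (B ∩ someAtLeft X Y n) = μ.real (B ∩ {ω | X n ω = 0} ∩ {ω | Y n ω = -1}) +
      μ.real (B ∩ {ω | Y n ω = 0} ∩ {ω | X n ω = -1}) := by
  rw [h.measureReal_eq_add_of_odd hn, inter_someAtLeft_inter_fst_eq_zero, ← someAtLeft_comm,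
    inter_someAtLeft_inter_fst_eq_zero]

theorem setIntegral_wl_succ (h : TwoWalkerUrn μ F X Y wl wr a b) (hS : MeasurableSet S)
    (hT : MeasurableSet T)
    (hST : ∀ ω ∈ S, ((X n ω = -1 ∧ X (n + 1) ω = 0) ∨ (X n ω = 0 ∧ X (n + 1) ω = -1) ∨
        (Y n ω = -1 ∧ Y (n + 1) ω = 0) ∨ (Y n ω = 0 ∧ Y (n + 1) ω = -1)) ↔ ω ∈ T) :
    ∫ ω in S, wl (n + 1) ω ∂μ = ∫ ω in S, wl n ω ∂μ + μ.real (S ∩ T) := by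
  have hwl : Set.EqOn (wl (n + 1)) (fun ω => wl n ω + T.indicator (fun _ => (1 : ℝ)) ω) S :=
    fun ω hω => by
      classical
      beta_reduce
      rw [h.wl_succ, Set.indicator_apply, if_congr (hST ω hω) rfl rfl]
  rw [setIntegral_congr_fun hS hwl, integral_add (h.integrable_wl n).integrableOn
    ((integrable_const 1).indicator hT).integrableOn, setIntegral_indicator hT,
    setIntegral_one_eq_measureReal]

theorem setIntegral_inter_meetAt_succ_of_center (h : TwoWalkerUrn μ F X Y wl wr a b)
    (hB : MeasurableSet[F n] B) (hBX : ∀ ω ∈ B, X n ω = 0 ∧ Y n ω ≠ 0)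
    (hf : StronglyMeasurable[F n] f) (hfi : Integrable f μ) :
    ∫ ω in B ∩ meetAt X Y (n + 1), f ω ∂μ = (∫ ω in B, f ω ∂μ) / 2 := by
  have hset : B ∩ meetAt X Y (n + 1) = B ∩ {ω | Y (n + 1) ω = 0} := by
    ext ω
    simp only [meetAt, Set.mem_inter_iff, Set.mem_ofPred_eq]
    constructor
    · rintro ⟨hω, -, h0⟩; exact ⟨hω, h0⟩
    · rintro ⟨hω, h0⟩; have := h.step_spec n ω; have := hBX ω hω; exact ⟨hω, by omega, h0⟩
  rw [hset, h.law_snd.setIntegral_inter_succ_eq_zero h.adapted_snd (h.snd_mem (n + 1)) hB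
    (fun ω hω => by have := h.step_spec n ω; have := hBX ω hω; omega) hf hfi]

theorem setIntegral_inter_meetAt_succ_of_odd (h : TwoWalkerUrn μ F X Y wl wr a b)
    (hn : Odd n) (hB : MeasurableSet[F n] B) (hf : StronglyMeasurable[F n] f)
    (hfi : Integrable f μ) :
    ∫ ω in B ∩ meetAt X Y (n + 1), f ω ∂μ = (∫ ω in B, f ω ∂μ) / 2 := by
  rw [h.setIntegral_eq_add_of_odd hn hfi.integrableOn, Set.inter_right_comm,
    h.setIntegral_inter_meetAt_succ_of_center (hB.inter (h.measurableSet_fst_eq n 0))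
      (fun _ => h.center_of_mem_inter_of_odd hn) hf hfi,
    Set.inter_right_comm, ← meetAt_comm,
    h.swap.setIntegral_inter_meetAt_succ_of_center (hB.inter (h.swap.measurableSet_fst_eq n 0))
      (fun _ => h.swap.center_of_mem_inter_of_odd hn) hf hfi,
    ← add_div, ← h.setIntegral_eq_add_of_odd hn hfi.integrableOn]

theorem measureReal_inter_someAtLeft_succ_of_outside (h : TwoWalkerUrn μ F X Y wl wr a b)
    (hS : MeasurableSet[F n] S) (hSX : ∀ ω ∈ S, X n ω ≠ 0 ∧ Y n ω ≠ 0) :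
    μ.real (S ∩ someAtLeft X Y (n + 1)) =
      (μ.real (S ∩ {ω | X n ω = -1}) + μ.real (S ∩ {ω | Y n ω = -1})) / 2 := by
  have hset : S ∩ someAtLeft X Y (n + 1) =
      S ∩ {ω | X n ω = -1} ∩ {ω | Y (n + 1) ω = 0} ∪
        S ∩ {ω | Y n ω = -1} ∩ {ω | X (n + 1) ω = 0} := by
    rw [Set.inter_assoc, Set.inter_assoc, ← Set.inter_union_distrib_left]
    refine Set.ext fun ω => and_congr_right fun hω => ?_
    have := hSX ω hω
    have := h.step_spec n ω
    simp only [someAtLeft, Set.mem_union, Set.mem_inter_iff, Set.mem_ofPred_eq]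
    omega
  have hdisj : Disjoint (S ∩ {ω | X n ω = -1} ∩ {ω | Y (n + 1) ω = 0})
      (S ∩ {ω | Y n ω = -1} ∩ {ω | X (n + 1) ω = 0}) :=
    Set.disjoint_left.2 fun ω ⟨⟨_, h1⟩, h2⟩ ⟨⟨_, h3⟩, h4⟩ => by
      have := h.step_spec n ω
      simp only [Set.mem_ofPred_eq] at h1 h2 h3 h4
      omega
  have hXS := hS.inter (h.measurableSet_fst_eq n (-1))
  have hYS := hS.inter (h.swap.measurableSet_fst_eq n (-1))
  rw [hset, measureReal_union hdisj (F.le n _ hYS |>.inter (F.le _ _ (h.measurableSet_fst_eq _ 0))),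
    h.law_snd.measureReal_inter_succ_eq_zero h.adapted_snd (h.snd_mem _) hXS
      (fun ω hω => by have := hSX ω hω.1; have := h.step_spec n ω; omega),
    h.law_fst.measureReal_inter_succ_eq_zero h.adapted_fst (h.fst_mem _) hYS
      (fun ω hω => by have := hSX ω hω.1; have := h.step_spec n ω; omega), add_div]

theorem setIntegral_wl_succ_of_outside (h : TwoWalkerUrn μ F X Y wl wr a b)
    (hS : MeasurableSet[F n] S) (hSX : ∀ ω ∈ S, X n ω ≠ 0 ∧ Y n ω ≠ 0) :
    ∫ ω in S, wl (n + 1) ω ∂μ = ∫ ω in S, wl n ω ∂μ +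
      (μ.real (S ∩ {ω | X n ω = -1}) + μ.real (S ∩ {ω | Y n ω = -1})) / 2 := by
  have hXS := hS.inter (h.measurableSet_fst_eq n (-1))
  have hYS := hS.inter (h.swap.measurableSet_fst_eq n (-1))
  have hX0 := F.le _ _ (h.measurableSet_fst_eq (n + 1) 0)
  have hY0 := F.le _ _ (h.swap.measurableSet_fst_eq (n + 1) 0)
  have hdisj : Disjoint (S ∩ {ω | X n ω = -1} ∩ {ω | X (n + 1) ω = 0})
      (S ∩ {ω | Y n ω = -1} ∩ {ω | Y (n + 1) ω = 0}) :=
    Set.disjoint_left.2 fun ω ⟨⟨_, h1⟩, h2⟩ ⟨⟨_, h3⟩, h4⟩ => by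
      have := h.step_spec n ω
      simp only [Set.mem_ofPred_eq] at h1 h2 h3 h4
      omega
  rw [h.setIntegral_wl_succ (F.le n _ hS)
      (((F.le n _ (h.measurableSet_fst_eq n (-1))).inter hX0).union
        ((F.le n _ (h.swap.measurableSet_fst_eq n (-1))).inter hY0))
      (fun ω hω => by
        have := hSX ω hω
        have := h.step_spec n ω
        simp only [Set.mem_union, Set.mem_inter_iff, Set.mem_ofPred_eq]
        omega),
    Set.inter_union_distrib_left, ← Set.inter_assoc, ← Set.inter_assoc,
    measureReal_union hdisj ((F.le n _ hYS).inter hY0),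
    h.law_fst.measureReal_inter_succ_eq_zero h.adapted_fst (h.fst_mem _) hXS
      (fun ω hω => by have := hSX ω hω.1; have := h.step_spec n ω; omega),
    h.law_snd.measureReal_inter_succ_eq_zero h.adapted_snd (h.snd_mem _) hYS
      (fun ω hω => by have := hSX ω hω.1; have := h.step_spec n ω; omega), add_div]

theorem measureReal_diff_meetAt_inter_fst_eq_neg_one (h : TwoWalkerUrn μ F X Y wl wr a b)
    (hB : MeasurableSet[F n] B) (hBX : ∀ ω ∈ B, X n ω = 0 ∧ Y n ω ≠ 0) :
    μ.real (B \ meetAt X Y (n + 1) ∩ {ω | X (n + 1) ω = -1}) =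
      (∫ ω in B, wl n ω ∂μ) / (a + b + n) / 2 := by
  have hset : B \ meetAt X Y (n + 1) ∩ {ω | X (n + 1) ω = -1} =
      B ∩ {ω | X (n + 1) ω = -1} := by
    ext ω
    simp only [meetAt, Set.mem_inter_iff, Set.mem_sdiff, Set.mem_ofPred_eq]
    constructor
    · rintro ⟨⟨hω, -⟩, h1⟩; exact ⟨hω, h1⟩
    · rintro ⟨hω, h1⟩; exact ⟨⟨hω, by omega⟩, h1⟩
  rw [hset, h.law_fst.measureReal_inter_succ_eq_neg_one h.adapted_fst hB fun ω hω => (hBX ω hω).1]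
  simp only [h.wl_add_wr, integral_div]

theorem measureReal_diff_meetAt_inter_snd_eq_neg_one (h : TwoWalkerUrn μ F X Y wl wr a b)
    (hB : MeasurableSet[F n] B) (hBX : ∀ ω ∈ B, X n ω = 0 ∧ Y n ω ≠ 0) :
    μ.real (B \ meetAt X Y (n + 1) ∩ {ω | Y (n + 1) ω = -1}) =
      μ.real (B ∩ {ω | Y n ω = -1}) / 2 := by
  have hset : B \ meetAt X Y (n + 1) ∩ {ω | Y (n + 1) ω = -1} =
      (B ∩ {ω | Y n ω = -1}) \ {ω | Y (n + 1) ω = 0} := by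
    ext ω
    have := hBX ω
    have := h.step_spec n ω
    simp only [meetAt, Set.mem_inter_iff, Set.mem_sdiff, Set.mem_ofPred_eq]
    constructor
    · rintro ⟨⟨hω, -⟩, h1⟩; exact ⟨⟨hω, by grind⟩, by omega⟩
    · rintro ⟨⟨hω, h1⟩, h2⟩; exact ⟨⟨hω, by grind⟩, by grind⟩
  have hBY := hB.inter (h.swap.measurableSet_fst_eq n (-1))
  have hsplit := measureReal_inter_add_sdiff (μ := μ) (s := B ∩ {ω | Y n ω = -1})
    (F.le _ _ (h.swap.measurableSet_fst_eq (n + 1) 0))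
  rw [h.law_snd.measureReal_inter_succ_eq_zero h.adapted_snd (h.snd_mem _) hBY
    (fun ω hω => Or.inr hω.2)] at hsplit
  rw [hset]
  linarith

theorem setIntegral_diff_meetAt_wl (h : TwoWalkerUrn μ F X Y wl wr a b)
    (hB : MeasurableSet[F n] B) (hBX : ∀ ω ∈ B, X n ω = 0 ∧ Y n ω ≠ 0) :
    ∫ ω in B \ meetAt X Y (n + 1), wl n ω ∂μ = (∫ ω in B, wl n ω ∂μ) / 2 := by
  have hsplit := integral_inter_add_sdiff (s := B) (F.le _ _ (h.measurableSet_meetAt (n + 1)))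
    (h.integrable_wl n).integrableOn (μ := μ)
  rw [h.setIntegral_inter_meetAt_succ_of_center hB hBX (h.adapted_wl n).stronglyMeasurable
    (h.integrable_wl n)] at hsplit
  linarith

theorem measureReal_diff_meetAt_inter_someAtLeft_of_center (h : TwoWalkerUrn μ F X Y wl wr a b)
    (hB : MeasurableSet[F n] B) (hBX : ∀ ω ∈ B, X n ω = 0 ∧ Y n ω ≠ 0) :
    μ.real (B \ meetAt X Y (n + 1) ∩ someAtLeft X Y (n + 2)) =
      ((∫ ω in B, wl n ω ∂μ) / (a + b + n) + μ.real (B ∩ {ω | Y n ω = -1})) / 4 := by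
  rw [h.measureReal_inter_someAtLeft_succ_of_outside (h.measurableSet_diff_meetAt hB)
      fun ω hω => h.outside_of_mem_diff_meetAt hBX hω,
    h.measureReal_diff_meetAt_inter_fst_eq_neg_one hB hBX,
    h.measureReal_diff_meetAt_inter_snd_eq_neg_one hB hBX]
  ring

theorem setIntegral_diff_meetAt_wl_add_two_of_center (h : TwoWalkerUrn μ F X Y wl wr a b)
    (hB : MeasurableSet[F n] B) (hBX : ∀ ω ∈ B, X n ω = 0 ∧ Y n ω ≠ 0) :
    ∫ ω in B \ meetAt X Y (n + 1), wl (n + 2) ω ∂μ =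
      (∫ ω in B, wl n ω ∂μ) / 2 + (∫ ω in B, wl n ω ∂μ) / (a + b + n) / 2 +
        ((∫ ω in B, wl n ω ∂μ) / (a + b + n) + μ.real (B ∩ {ω | Y n ω = -1})) / 4 := by
  have hD := h.measurableSet_diff_meetAt hB
  rw [h.setIntegral_wl_succ_of_outside hD fun ω hω => h.outside_of_mem_diff_meetAt hBX hω,
    h.setIntegral_wl_succ (F.le _ _ hD) (F.le _ _ (h.measurableSet_fst_eq (n + 1) (-1)))
      fun ω hω => by
        have := hBX ω hω.1
        have := h.step_spec n ω
        have := hω.2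
        simp only [meetAt, Set.mem_ofPred_eq] at this ⊢
        omega,
    h.setIntegral_diff_meetAt_wl hB hBX, h.measureReal_diff_meetAt_inter_fst_eq_neg_one hB hBX,
    h.measureReal_diff_meetAt_inter_snd_eq_neg_one hB hBX]
  ring

theorem measureReal_diff_meetAt_inter_someAtLeft_of_odd (h : TwoWalkerUrn μ F X Y wl wr a b)
    (hn : Odd n) (hB : MeasurableSet[F n] B) :
    μ.real (B \ meetAt X Y (n + 1) ∩ someAtLeft X Y (n + 2)) =
      ((∫ ω in B, wl n ω ∂μ) / (a + b + n) + μ.real (B ∩ someAtLeft X Y n)) / 4 := by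
  have hX := h.measureReal_diff_meetAt_inter_someAtLeft_of_center
    (hB.inter (h.measurableSet_fst_eq n 0)) fun _ => h.center_of_mem_inter_of_odd hn
  have hY := h.swap.measureReal_diff_meetAt_inter_someAtLeft_of_center
    (hB.inter (h.swap.measurableSet_fst_eq n 0)) fun _ => h.swap.center_of_mem_inter_of_odd hn
  rw [meetAt_comm, someAtLeft_comm] at hY
  have hsplit (C : Set Ω) : B \ meetAt X Y (n + 1) ∩ someAtLeft X Y (n + 2) ∩ C =
      (B ∩ C) \ meetAt X Y (n + 1) ∩ someAtLeft X Y (n + 2) := by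
    ext; simp only [Set.mem_inter_iff, Set.mem_sdiff]; tauto
  rw [h.measureReal_eq_add_of_odd hn, hsplit, hsplit, hX, hY,
    h.measureReal_inter_someAtLeft_of_odd hn,
    h.setIntegral_eq_add_of_odd (B := B) hn (h.integrable_wl n).integrableOn]
  ring

theorem setIntegral_diff_meetAt_wl_add_two_of_odd (h : TwoWalkerUrn μ F X Y wl wr a b)
    (hn : Odd n) (hB : MeasurableSet[F n] B) :
    ∫ ω in B \ meetAt X Y (n + 1), wl (n + 2) ω ∂μ =
      (∫ ω in B, wl n ω ∂μ) / 2 + (∫ ω in B, wl n ω ∂μ) / (a + b + n) / 2 +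
        ((∫ ω in B, wl n ω ∂μ) / (a + b + n) + μ.real (B ∩ someAtLeft X Y n)) / 4 := by
  have hX := h.setIntegral_diff_meetAt_wl_add_two_of_center
    (hB.inter (h.measurableSet_fst_eq n 0)) fun _ => h.center_of_mem_inter_of_odd hn
  have hY := h.swap.setIntegral_diff_meetAt_wl_add_two_of_center
    (hB.inter (h.swap.measurableSet_fst_eq n 0)) fun _ => h.swap.center_of_mem_inter_of_odd hn
  rw [meetAt_comm] at hY
  rw [h.setIntegral_eq_add_of_odd hn (h.integrable_wl (n + 2)).integrableOn,
    Set.sdiff_inter_right_comm, Set.sdiff_inter_right_comm, hX, hY,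
    h.measureReal_inter_someAtLeft_of_odd hn,
    h.setIntegral_eq_add_of_odd (B := B) hn (h.integrable_wl n).integrableOn]
  ring

end FiniteMeasure

variable [IsProbabilityMeasure μ]

theorem measureReal_someAtLeft_one (h : TwoWalkerUrn μ F X Y wl wr a b) :
    μ.real (someAtLeft X Y 1) = a / (a + b) := by
  have hfirst (X' Y' : ℕ → Ω → ℤ) (h' : TwoWalkerUrn μ F X' Y' wl wr a b) :
      μ.real {ω | X' 1 ω = -1} = a / (a + b) / 2 := by
    simpa [h'.wl_zero, h'.wr_zero, h'.fst_zero] using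
      h'.law_fst.measureReal_inter_succ_eq_neg_one (B := Set.univ) (n := 0) h'.adapted_fst
        MeasurableSet.univ (by simp [h'.fst_zero])
  have hdisj : Disjoint {ω | X 1 ω = -1} {ω | Y 1 ω = -1} :=
    Set.disjoint_left.2 fun ω h1 h2 => by
      have := h.step_spec 0 ω
      simp only [h.fst_zero, h.snd_zero, zero_add, Set.mem_ofPred_eq] at this h1 h2
      omega
  rw [someAtLeft, Set.ofPred_or, measureReal_union hdisj
    (F.le _ _ (h.swap.measurableSet_fst_eq 1 (-1))), hfirst X Y h, hfirst Y X h.swap]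
  ring

theorem integral_wl_one (h : TwoWalkerUrn μ F X Y wl wr a b) :
    ∫ ω, wl 1 ω ∂μ = a + a / (a + b) := by
  have := h.setIntegral_wl_succ (n := 0) MeasurableSet.univ
    (F.le _ _ (h.measurableSet_someAtLeft 1)) fun ω _ => by
      simp [someAtLeft, h.fst_zero, h.snd_zero]
  simpa [h.wl_zero, h.measureReal_someAtLeft_one] using this

theorem noMeetBefore_invariant (h : TwoWalkerUrn μ F X Y wl wr a b) (j : ℕ) :
    μ.real (noMeetBefore X Y (2 * j + 2) ∩ someAtLeft X Y (2 * j + 1)) =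
        (1 / 2) ^ j * (a / (a + b)) ∧
      ∫ ω in noMeetBefore X Y (2 * j + 2), wl (2 * j + 1) ω ∂μ =
        (a + b + (2 * j + 1)) * ((1 / 2) ^ j * (a / (a + b))) := by
  have hab : a + b ≠ 0 := (add_pos h.left_pos h.right_pos).ne'
  induction j with
  | zero =>
    simp only [h.noMeetBefore_two, Set.univ_inter, Measure.restrict_univ,
      h.measureReal_someAtLeft_one, h.integral_wl_one]
    constructor
    · ring
    · field_simp; ring
  | succ j ih =>
    obtain ⟨hleft, hwl⟩ := ih
    have hn : Odd (2 * j + 1) := odd_two_mul_add_one j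
    have hB := h.measurableSet_noMeetBefore (N := 2 * j + 2) (n := 2 * j + 1) le_rfl
    have hnext : noMeetBefore X Y (2 * (j + 1) + 2) =
        noMeetBefore X Y (2 * j + 2) \ meetAt X Y (2 * j + 1 + 1) :=
      h.noMeetBefore_add_three_of_odd hn
    rw [hnext, show 2 * (j + 1) + 1 = 2 * j + 1 + 2 by ring,
      h.measureReal_diff_meetAt_inter_someAtLeft_of_odd hn hB,
      h.setIntegral_diff_meetAt_wl_add_two_of_odd hn hB, hleft, hwl]
    have hpos : (a + b + ((2 * j + 1 : ℕ) : ℝ)) ≠ 0 := by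
      have := h.left_pos; have := h.right_pos; positivity
    push_cast at hpos ⊢
    constructor
    · field_simp; ring
    · field_simp; ring

theorem meeting_quantities (h : TwoWalkerUrn μ F X Y wl wr a b) (j : ℕ) :
    ∫ ω in noMeetBefore X Y (2 * j + 2) ∩ meetAt X Y (2 * j + 2),
        wl (2 * j + 2) ω / (wl (2 * j + 2) ω + wr (2 * j + 2) ω) ∂μ =
        (1 / 2) ^ (j + 1) * (a / (a + b)) ∧
      μ.real (noMeetBefore X Y (2 * j + 2) ∩ meetAt X Y (2 * j + 2) ∩ someAtLeft X Y (2 * j + 1)) =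
        (1 / 2) ^ (j + 1) * (a / (a + b)) := by
  obtain ⟨hleft, hwl⟩ := h.noMeetBefore_invariant j
  have hn : Odd (2 * j + 1) := odd_two_mul_add_one j
  have hB := h.measurableSet_noMeetBefore (N := 2 * j + 2) (n := 2 * j + 1) le_rfl
  have hBL := hB.inter (h.measurableSet_someAtLeft (2 * j + 1))
  have hq : μ.real (noMeetBefore X Y (2 * j + 2) ∩ meetAt X Y (2 * j + 2) ∩
      someAtLeft X Y (2 * j + 1)) = (1 / 2) ^ (j + 1) * (a / (a + b)) := by
    rw [Set.inter_right_comm, ← setIntegral_one_eq_measureReal,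
      h.setIntegral_inter_meetAt_succ_of_odd hn hBL stronglyMeasurable_const (integrable_const 1),
      setIntegral_one_eq_measureReal, hleft, pow_succ]
    ring
  refine ⟨?_, hq⟩
  have hab : a + b ≠ 0 := (add_pos h.left_pos h.right_pos).ne'
  have hpos : (a + b + ((2 * j + 2 : ℕ) : ℝ)) ≠ 0 := by
    have := h.left_pos; have := h.right_pos; positivity
  have hreturn : ∫ ω in noMeetBefore X Y (2 * j + 2) ∩ meetAt X Y (2 * j + 2), wl (2 * j + 2) ω ∂μ
      = ∫ ω in noMeetBefore X Y (2 * j + 2) ∩ meetAt X Y (2 * j + 2), wl (2 * j + 1) ω ∂μ +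
        μ.real (noMeetBefore X Y (2 * j + 2) ∩ meetAt X Y (2 * j + 2) ∩
          someAtLeft X Y (2 * j + 1)) :=
    h.setIntegral_wl_succ ((F.le _ _ hB).inter (F.le _ _ (h.measurableSet_meetAt _)))
      (F.le _ _ (h.measurableSet_someAtLeft _)) fun ω hω => by
        have := h.step_spec (2 * j + 1) ω
        have := hω.2
        simp only [meetAt, someAtLeft, Set.mem_ofPred_eq] at this ⊢
        rw [show 2 * j + 1 + 1 = 2 * j + 2 from rfl] at *
        omega
  simp only [h.wl_add_wr, integral_div]
  rw [hreturn, hq, h.setIntegral_inter_meetAt_succ_of_odd hn hB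
    (h.adapted_wl _).stronglyMeasurable (h.integrable_wl _), hwl, pow_succ]
  push_cast at hpos ⊢
  rw [div_eq_iff hpos]
  ring

end TwoWalkerUrn

end Urn

theorem two_walker_urn_meeting_quantities_general
    {Ω : Type*} [m : MeasurableSpace Ω] (μ : Measure Ω) [IsProbabilityMeasure μ]
    (F : Filtration ℕ m) (X1 X2 : ℕ → Ω → ℤ) (wl wr : ℕ → Ω → ℝ) (a b : ℝ)
    (ha : 0 < a) (hb : 0 < b)
    (hadX1 : Adapted F X1) (hadX2 : Adapted F X2)
    (hadwl : Adapted F wl)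
    (hX10 : X1 0 = fun _ => 0) (hX20 : X2 0 = fun _ => 0)
    (hwl0 : wl 0 = fun _ => a) (hwr0 : wr 0 = fun _ => b)
    (hrange1 : ∀ n ω, X1 n ω ∈ Set.Icc (-1 : ℤ) 1)
    (hrange2 : ∀ n ω, X2 n ω ∈ Set.Icc (-1 : ℤ) 1)
    -- exactly one walker moves at each step, by exactly one step
    (hmove : ∀ n ω,
      (X2 (n + 1) ω = X2 n ω ∧ |X1 (n + 1) ω - X1 n ω| = 1) ∨
      (X1 (n + 1) ω = X1 n ω ∧ |X2 (n + 1) ω - X2 n ω| = 1))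
    -- the weight of a traversed edge increases by 1
    (hwl : ∀ n ω, wl (n + 1) ω = wl n ω +
      (if (X1 n ω = -1 ∧ X1 (n + 1) ω = 0) ∨ (X1 n ω = 0 ∧ X1 (n + 1) ω = -1) ∨
          (X2 n ω = -1 ∧ X2 (n + 1) ω = 0) ∨ (X2 n ω = 0 ∧ X2 (n + 1) ω = -1)
        then 1 else 0))
    (hwr : ∀ n ω, wr (n + 1) ω = wr n ω +
      (if (X1 n ω = 1 ∧ X1 (n + 1) ω = 0) ∨ (X1 n ω = 0 ∧ X1 (n + 1) ω = 1) ∨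
          (X2 n ω = 1 ∧ X2 (n + 1) ω = 0) ∨ (X2 n ω = 0 ∧ X2 (n + 1) ω = 1)
        then 1 else 0))
    -- conditional transition probabilities: a uniformly chosen walker moves,
    -- from the center proportionally to the edge weights, from ±1 back to 0
    (hcond1up : ∀ n,
      μ[Set.indicator {ω | X1 (n + 1) ω = X1 n ω + 1} (fun _ => (1 : ℝ)) | F n]
        =ᵐ[μ] fun ω => (1 / 2) *
          (if X1 n ω = 0 then wr n ω / (wl n ω + wr n ω)
           else if X1 n ω = -1 then 1 else 0))
    (hcond1down : ∀ n,
      μ[Set.indicator {ω | X1 (n + 1) ω = X1 n ω - 1} (fun _ => (1 : ℝ)) | F n]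
        =ᵐ[μ] fun ω => (1 / 2) *
          (if X1 n ω = 0 then wl n ω / (wl n ω + wr n ω)
           else if X1 n ω = 1 then 1 else 0))
    (hcond2up : ∀ n,
      μ[Set.indicator {ω | X2 (n + 1) ω = X2 n ω + 1} (fun _ => (1 : ℝ)) | F n]
        =ᵐ[μ] fun ω => (1 / 2) *
          (if X2 n ω = 0 then wr n ω / (wl n ω + wr n ω)
           else if X2 n ω = -1 then 1 else 0))
    (hcond2down : ∀ n,
      μ[Set.indicator {ω | X2 (n + 1) ω = X2 n ω - 1} (fun _ => (1 : ℝ)) | F n]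
        =ᵐ[μ] fun ω => (1 / 2) *
          (if X2 n ω = 0 then wl n ω / (wl n ω + wr n ω)
           else if X2 n ω = 1 then 1 else 0)) :
    ∀ l : ℕ, 1 ≤ l →
      -- E_{a,b,l}: expected left-weight fraction at the meeting time, on {τ = 2l}
      (∫ ω in {ω | sInf {k | 1 ≤ k ∧ X1 k ω = 0 ∧ X2 k ω = 0} = 2 * l},
          wl (2 * l) ω / (wl (2 * l) ω + wr (2 * l) ω) ∂μ) =
        (1 / 2) ^ l * (a / (a + b)) ∧
      -- q_{a,b,l}: the last returning walker comes from the left node, and τ = 2l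
      (μ {ω | sInf {k | 1 ≤ k ∧ X1 k ω = 0 ∧ X2 k ω = 0} = 2 * l ∧
          (X1 (2 * l - 1) ω = -1 ∨ X2 (2 * l - 1) ω = -1)}).toReal =
        (1 / 2) ^ l * (a / (a + b)) := by
  have h : TwoWalkerUrn μ F X1 X2 wl wr a b :=
    ⟨ha, hb, hadX1, hadX2, hadwl, hX10, hX20, hwl0, hwr0, hrange1, hrange2, hmove, hwl, hwr,
      ⟨hcond1up, hcond1down⟩, ⟨hcond2up, hcond2down⟩⟩
  intro l hl
  obtain ⟨j, rfl⟩ : ∃ j, l = j + 1 := ⟨l - 1, by omega⟩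
  rw [show 2 * (j + 1) = 2 * j + 2 by ring, show 2 * j + 2 - 1 = 2 * j + 1 by omega,
    Set.ofPred_and, setOf_sInf_meet_eq X1 X2 (by omega)]
  exact h.meeting_quantities j

/-- Two walkers on the path `{-1, 0, 1}` both start at the center with
edge weights `a` (left) and `b` (right); at each step one of the two walkers is
chosen uniformly at random to move, a walker at the center moves left/right with
probabilities proportional to the current edge weights, a walker at an outer node
returns to the center, and a traversed edge gains weight `1`. With `τ` the first time
`≥ 1` at which both walkers are back at the center,
`E_{a,b,l} = E[(left fraction at τ)·1_{τ = 2l}]` and `q_{a,b,l} = P[the last walker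
returning to the center comes from the left node and τ = 2l]` satisfy
`E_{a,b,l} = q_{a,b,l} = 2^{-l}·a/(a+b)` for all `l ≥ 1`. -/
theorem two_walker_urn_meeting_quantities
    {Ω : Type*} [m : MeasurableSpace Ω] (μ : Measure Ω) [IsProbabilityMeasure μ]
    (F : Filtration ℕ m) (X1 X2 : ℕ → Ω → ℤ) (wl wr : ℕ → Ω → ℝ) (a b : ℝ)
    (ha : 0 < a) (hb : 0 < b)
    (hadX1 : Adapted F X1) (hadX2 : Adapted F X2)
    (hadwl : Adapted F wl) (hadwr : Adapted F wr)
    (hX10 : X1 0 = fun _ => 0) (hX20 : X2 0 = fun _ => 0)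
    (hwl0 : wl 0 = fun _ => a) (hwr0 : wr 0 = fun _ => b)
    (hrange1 : ∀ n ω, X1 n ω ∈ Set.Icc (-1 : ℤ) 1)
    (hrange2 : ∀ n ω, X2 n ω ∈ Set.Icc (-1 : ℤ) 1)
    -- exactly one walker moves at each step, by exactly one step
    (hmove : ∀ n ω,
      (X2 (n + 1) ω = X2 n ω ∧ |X1 (n + 1) ω - X1 n ω| = 1) ∨
      (X1 (n + 1) ω = X1 n ω ∧ |X2 (n + 1) ω - X2 n ω| = 1))
    -- the weight of a traversed edge increases by 1
    (hwl : ∀ n ω, wl (n + 1) ω = wl n ω +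
      (if (X1 n ω = -1 ∧ X1 (n + 1) ω = 0) ∨ (X1 n ω = 0 ∧ X1 (n + 1) ω = -1) ∨
          (X2 n ω = -1 ∧ X2 (n + 1) ω = 0) ∨ (X2 n ω = 0 ∧ X2 (n + 1) ω = -1)
        then 1 else 0))
    (hwr : ∀ n ω, wr (n + 1) ω = wr n ω +
      (if (X1 n ω = 1 ∧ X1 (n + 1) ω = 0) ∨ (X1 n ω = 0 ∧ X1 (n + 1) ω = 1) ∨
          (X2 n ω = 1 ∧ X2 (n + 1) ω = 0) ∨ (X2 n ω = 0 ∧ X2 (n + 1) ω = 1)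
        then 1 else 0))
    -- conditional transition probabilities: a uniformly chosen walker moves,
    -- from the center proportionally to the edge weights, from ±1 back to 0
    (hcond1up : ∀ n,
      μ[Set.indicator {ω | X1 (n + 1) ω = X1 n ω + 1} (fun _ => (1 : ℝ)) | F n]
        =ᵐ[μ] fun ω => (1 / 2) *
          (if X1 n ω = 0 then wr n ω / (wl n ω + wr n ω)
           else if X1 n ω = -1 then 1 else 0))
    (hcond1down : ∀ n,
      μ[Set.indicator {ω | X1 (n + 1) ω = X1 n ω - 1} (fun _ => (1 : ℝ)) | F n]
        =ᵐ[μ] fun ω => (1 / 2) *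
          (if X1 n ω = 0 then wl n ω / (wl n ω + wr n ω)
           else if X1 n ω = 1 then 1 else 0))
    (hcond2up : ∀ n,
      μ[Set.indicator {ω | X2 (n + 1) ω = X2 n ω + 1} (fun _ => (1 : ℝ)) | F n]
        =ᵐ[μ] fun ω => (1 / 2) *
          (if X2 n ω = 0 then wr n ω / (wl n ω + wr n ω)
           else if X2 n ω = -1 then 1 else 0))
    (hcond2down : ∀ n,
      μ[Set.indicator {ω | X2 (n + 1) ω = X2 n ω - 1} (fun _ => (1 : ℝ)) | F n]
        =ᵐ[μ] fun ω => (1 / 2) *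
          (if X2 n ω = 0 then wl n ω / (wl n ω + wr n ω)
           else if X2 n ω = 1 then 1 else 0)) :
    ∀ l : ℕ, 1 ≤ l →
      -- E_{a,b,l}: expected left-weight fraction at the meeting time, on {τ = 2l}
      (∫ ω in {ω | sInf {k | 1 ≤ k ∧ X1 k ω = 0 ∧ X2 k ω = 0} = 2 * l},
          wl (2 * l) ω / (wl (2 * l) ω + wr (2 * l) ω) ∂μ) =
        (1 / 2) ^ l * (a / (a + b)) ∧
      -- q_{a,b,l}: the last returning walker comes from the left node, and τ = 2l
      (μ {ω | sInf {k | 1 ≤ k ∧ X1 k ω = 0 ∧ X2 k ω = 0} = 2 * l ∧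
          (X1 (2 * l - 1) ω = -1 ∨ X2 (2 * l - 1) ω = -1)}).toReal =
        (1 / 2) ^ l * (a / (a + b)) :=
  two_walker_urn_meeting_quantities_general (m := m) μ F X1 X2 wl wr a b ha hb hadX1 hadX2 hadwl
    hX10 hX20 hwl0 hwr0 hrange1 hrange2 hmove hwl hwr hcond1up hcond1down hcond2up hcond2down
end

section
/- Let (M_n) be a sequence of random variables converging almost surely to M_∞, and let (F_k) be a process with F_{τ_n} = M_n for stopping times τ_n satisfying τ_n ≥ 2n, such that each increment |F_{k+1} - F_k| ≤ 1/(2n) for k ≥ τ_n. If ∑_n P[τ_{n+1} - τ_n ≥ εn] < ∞ for every ε > 0, then F_k converges almost surely to M_∞ as k → ∞. -/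
open MeasureTheory Filter Topology

/-!
Borel–Cantelli, applied along `ε = 1/(m+1)`, shows that almost surely `τ (n+1) - τ n < ε n`
for all large `n`, for every `ε > 0`. On such an `ω`, each large time `k` lies in a block
`[τ n, τ (n+1))`, and there the walk has moved by at most `(τ (n+1) - τ n) / (2n) < ε / 2`
from `F_{τ n} = M n`, which is itself close to `M∞`.
-/

lemma ae_eventually_notMem_of_summable_toReal {Ω : Type*} [MeasurableSpace Ω] {μ : Measure Ω}
    [IsFiniteMeasure μ] {s : ℕ → Set Ω} (hs : Summable fun n => (μ (s n)).toReal) :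
    ∀ᵐ ω ∂μ, ∀ᶠ n in atTop, ω ∉ s n := by
  refine ae_eventually_notMem ?_
  have hsum : ∑' n, μ (s n) = ENNReal.ofReal (∑' n, (μ (s n)).toReal) := by
    simp [ENNReal.ofReal_tsum_of_nonneg (fun _ => ENNReal.toReal_nonneg) hs]
  exact hsum ▸ ENNReal.ofReal_ne_top

lemma ae_forall_eventually_lt_mul_of_summable {Ω : Type*} [MeasurableSpace Ω] {μ : Measure Ω}
    [IsFiniteMeasure μ] {X : ℕ → Ω → ℝ} {b : ℕ → ℝ} (hb : ∀ n, 0 ≤ b n)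
    (hX : ∀ ε : ℝ, 0 < ε → Summable fun n => (μ {ω | ε * b n ≤ X n ω}).toReal) :
    ∀ᵐ ω ∂μ, ∀ ε : ℝ, 0 < ε → ∀ᶠ n in atTop, X n ω < ε * b n := by
  have hrat : ∀ᵐ ω ∂μ, ∀ m : ℕ, ∀ᶠ n in atTop, X n ω < 1 / ((m : ℝ) + 1) * b n := by
    refine ae_all_iff.mpr fun m => ?_
    filter_upwards [ae_eventually_notMem_of_summable_toReal (hX _ Nat.one_div_pos_of_nat)]
      with ω hω
    simpa only [Set.mem_ofPred_eq, not_le] using hω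
  filter_upwards [hrat] with ω hω ε hε
  obtain ⟨m, hm⟩ := exists_nat_one_div_lt hε
  filter_upwards [hω m] with n hn
  exact hn.trans_le (by gcongr; exact hb n)

lemma Filter.Tendsto.exists_le_lt_succ {t : ℕ → ℕ} (ht : Tendsto t atTop atTop) {N k : ℕ}
    (hk : t N ≤ k) : ∃ n, N ≤ n ∧ t n ≤ k ∧ k < t (n + 1) := by
  classical
  have hex : ∃ j, N < j ∧ k < t j := by
    obtain ⟨B, hB⟩ := eventually_atTop.mp (ht.eventually_gt_atTop k)
    exact ⟨max B (N + 1), by omega, hB _ (le_max_left _ _)⟩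
  obtain ⟨hNj, hkj⟩ := Nat.find_spec hex
  refine ⟨Nat.find hex - 1, by omega, ?_, by rwa [Nat.sub_add_cancel (by omega)]⟩
  by_contra! hlt
  rcases (Nat.le_sub_one_of_lt hNj).eq_or_lt with hN | hN
  · rw [← hN] at hlt
    omega
  · exact Nat.find_min hex (by omega) ⟨hN, hlt⟩

lemma abs_sub_le_of_abs_succ_sub_le {f : ℕ → ℝ} {a k : ℕ} {c : ℝ} (hak : a ≤ k)
    (h : ∀ i, a ≤ i → |f (i + 1) - f i| ≤ c) : |f k - f a| ≤ (k - a : ℕ) * c := by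
  have := dist_le_Ico_sum_of_dist_le (f := f) hak (d := fun _ => c)
    fun hi _ => by rw [dist_comm]; exact h _ hi
  simpa [Real.dist_eq, abs_sub_comm] using this

theorem tendsto_of_tendsto_comp_of_abs_succ_sub_le {f : ℕ → ℝ} {t : ℕ → ℕ} {L : ℝ}
    (ht : Tendsto t atTop atTop) (hlim : Tendsto (fun n => f (t n)) atTop (𝓝 L))
    (hincr : ∀ n : ℕ, 1 ≤ n → ∀ k, t n ≤ k → |f (k + 1) - f k| ≤ 1 / (2 * n))
    (hgap : ∀ ε : ℝ, 0 < ε → ∀ᶠ n in atTop, (t (n + 1) : ℝ) - t n < ε * n) :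
    Tendsto f atTop (𝓝 L) := by
  refine Metric.tendsto_atTop.mpr fun δ hδ => ?_
  obtain ⟨N, hN⟩ := eventually_atTop.mp <| (Metric.tendsto_nhds.mp hlim (δ / 2) (half_pos hδ)).and
    ((hgap δ hδ).and (eventually_ge_atTop 1))
  refine ⟨t N, fun k hk => ?_⟩
  obtain ⟨n, hNn, hnk, hkn⟩ := ht.exists_le_lt_succ hk
  obtain ⟨hclose, hgapn, hn⟩ := hN n hNn
  have hnpos : (0 : ℝ) < n := by exact_mod_cast hn
  have hdrift : |f k - f (t n)| < δ / 2 := calc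
    |f k - f (t n)| ≤ (k - t n : ℕ) * (1 / (2 * n)) :=
      abs_sub_le_of_abs_succ_sub_le hnk (hincr n hn)
    _ ≤ ((t (n + 1) : ℝ) - t n) * (1 / (2 * n)) := by
      gcongr
      rw [Nat.cast_sub hnk]
      gcongr
    _ < δ * n * (1 / (2 * n)) := by gcongr
    _ = δ / 2 := by field_simp
  calc dist (f k) L ≤ dist (f k) (f (t n)) + dist (f (t n)) L := dist_triangle _ _ _
    _ < δ / 2 + δ / 2 := add_lt_add (by rwa [Real.dist_eq]) hclose
    _ = δ := add_halves δ

theorem convergence_transfer_general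
    {Ω : Type*} [MeasurableSpace Ω] (μ : Measure Ω) [IsProbabilityMeasure μ]
    (M : ℕ → Ω → ℝ) (Minf : Ω → ℝ) (Fp : ℕ → Ω → ℝ) (τ : ℕ → Ω → ℕ)
    (hM : ∀ᵐ ω ∂μ, Tendsto (fun n => M n ω) atTop (nhds (Minf ω)))
    (hFτ : ∀ n ω, Fp (τ n ω) ω = M n ω)
    (hτgrow : ∀ n ω, 2 * n ≤ τ n ω)
    (hincr : ∀ n : ℕ, 1 ≤ n → ∀ k ω, τ n ω ≤ k →
      |Fp (k + 1) ω - Fp k ω| ≤ 1 / (2 * n))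
    (htail : ∀ ε : ℝ, 0 < ε →
      Summable fun n : ℕ =>
        (μ {ω | ε * n ≤ ((τ (n + 1) ω : ℝ) - (τ n ω : ℝ))}).toReal) :
    ∀ᵐ ω ∂μ, Tendsto (fun k => Fp k ω) atTop (nhds (Minf ω)) := by
  filter_upwards [hM, ae_forall_eventually_lt_mul_of_summable (fun n => n.cast_nonneg) htail]
    with ω hMω hgap
  have hτ : Tendsto (fun n => τ n ω) atTop atTop :=
    tendsto_atTop_mono (fun n => (Nat.le_mul_of_pos_left n two_pos).trans (hτgrow n ω)) tendsto_id
  exact tendsto_of_tendsto_comp_of_abs_succ_sub_le hτ (by simpa only [hFτ] using hMω)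
    (fun n hn k hk => hincr n hn k ω hk) hgap

/-- Let `M_n → M_∞` a.s., and let `(F_k)` be a process with
`F_{τ_n} = M_n` for (strictly increasing) random times `τ_n ≥ 2n`, whose increments
after time `τ_n` satisfy `|F_{k+1} - F_k| ≤ 1/(2n)`. If
`∑_n P[τ_{n+1} - τ_n ≥ εn] < ∞` for every `ε > 0`, then `F_k → M_∞` a.s. -/
theorem convergence_transfer
    {Ω : Type*} [MeasurableSpace Ω] (μ : Measure Ω) [IsProbabilityMeasure μ]
    (M : ℕ → Ω → ℝ) (Minf : Ω → ℝ) (Fp : ℕ → Ω → ℝ) (τ : ℕ → Ω → ℕ)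
    (hM : ∀ᵐ ω ∂μ, Tendsto (fun n => M n ω) atTop (nhds (Minf ω)))
    (hFτ : ∀ n ω, Fp (τ n ω) ω = M n ω)
    (hτgrow : ∀ n ω, 2 * n ≤ τ n ω)
    (hτmono : ∀ n ω, τ n ω < τ (n + 1) ω)
    (hincr : ∀ n : ℕ, 1 ≤ n → ∀ k ω, τ n ω ≤ k →
      |Fp (k + 1) ω - Fp k ω| ≤ 1 / (2 * n))
    (htail : ∀ ε : ℝ, 0 < ε →
      Summable fun n : ℕ =>
        (μ {ω | ε * n ≤ ((τ (n + 1) ω : ℝ) - (τ n ω : ℝ))}).toReal) :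
    ∀ᵐ ω ∂μ, Tendsto (fun k => Fp k ω) atTop (nhds (Minf ω)) :=
  convergence_transfer_general μ M Minf Fp τ hM hFτ hτgrow hincr htail
end

section
/- A nearest-neighbor random walk in a fixed environment (ω_x)_{x ∈ ℤ} on ℤ (stepping right from x with probability ω_x ∈ (0,1)) is recurrent if and only if both series ∑_{z ≥ 1} ∏_{x=1}^{z} (1-ω_x)/ω_x and ∑_{z ≤ 0} ∏_{x=z}^{0} ω_x/(1-ω_x) diverge. -/
/-!
The scale function `S`, whose increments `S (z + 1) - S z` are the edge resistances, is harmonic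
for the walk, so `S (X n)` is a martingale. If `S` is bounded above (the first series converges),
this martingale converges, which forces the nearest-neighbour walk to leave every finite set, so
`0` is visited only finitely often. If `S` is unbounded below, then on the event that `X` stays
below some `b` the martingale stopped on leaving that event is bounded above and converges, but
`X` would then tend to `-∞` and `S (X n)` with it; so `X` is a.s. unbounded above. Reflecting
`z ↦ -z` handles the other end, and a walk unbounded on both sides crosses `0` infinitely often.
-/

open MeasureTheory Finset Filter Topology

def IsNearestNeighbourPath (x : ℕ → ℤ) : Prop :=
  ∀ n, x (n + 1) = x n + 1 ∨ x (n + 1) = x n - 1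

namespace IsNearestNeighbourPath

variable {x : ℕ → ℤ}

lemma neg (hx : IsNearestNeighbourPath x) : IsNearestNeighbourPath fun n => -x n :=
  fun n => by rcases hx n with h | h <;> simp only [h] <;> omega

lemma abs_apply_le (hx : IsNearestNeighbourPath x) (h0 : x 0 = 0) (n : ℕ) : |x n| ≤ n := by
  induction n with
  | zero => simp [h0]
  | succ n ih => rcases hx n with h | h <;> rw [abs_le] at ih ⊢ <;> push_cast <;> omega

lemma exists_eq_of_le_of_le (hx : IsNearestNeighbourPath x) {a b : ℕ} (hab : a ≤ b) {c : ℤ}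
    (hb : x b ≤ c) (ha : c ≤ x a) : ∃ k ∈ Set.Icc a b, x k = c := by
  induction b, hab using Nat.le_induction with
  | base => exact ⟨a, ⟨le_rfl, le_rfl⟩, le_antisymm hb ha⟩
  | succ b hab ih =>
    by_cases hc : x b ≤ c
    · obtain ⟨k, hk, hkc⟩ := ih hc
      exact ⟨k, ⟨hk.1, hk.2.trans b.le_succ⟩, hkc⟩
    · exact ⟨b + 1, ⟨by omega, le_rfl⟩, by rcases hx b with h | h <;> omega⟩

lemma infinite_setOf_eq_zero (hx : IsNearestNeighbourPath x) (h0 : x 0 = 0)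
    (hup : ∀ b, ∃ n, b < x n) (hdown : ∀ b, ∃ n, x n < b) : {n | x n = 0}.Infinite := by
  refine Set.infinite_of_forall_exists_gt fun N => ?_
  obtain ⟨n₁, hn₁⟩ := hup N
  obtain ⟨n₂, hn₂⟩ := hdown (-n₁)
  have h₁ := abs_le.1 (hx.abs_apply_le h0 n₁)
  have h₂ := abs_le.1 (hx.abs_apply_le h0 n₂)
  obtain ⟨k, hk, hk0⟩ := hx.exists_eq_of_le_of_le (a := n₁) (b := n₂) (c := 0) (by omega)
    (by omega) (by omega)
  exact ⟨k, hk0, by have := hk.1; omega⟩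

/-- A strictly increasing `f` makes the steps of `f ∘ x` away from a site `z` at least
`min (f (z + 1) - f z) (f z - f (z - 1)) > 0`; as these steps tend to `0`, every site is
eventually avoided. -/
lemma tendsto_cofinite_of_tendsto_comp (hx : IsNearestNeighbourPath x) {f : ℤ → ℝ}
    (hf : StrictMono f) {r : ℝ} (h : Tendsto (fun n => f (x n)) atTop (𝓝 r)) :
    Tendsto x atTop cofinite := by
  have hstep : Tendsto (fun n => f (x (n + 1)) - f (x n)) atTop (𝓝 0) := by
    simpa using (h.comp (tendsto_add_atTop_nat 1)).sub h
  have havoid (z : ℤ) : ∀ᶠ n in atTop, x n ≠ z := by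
    have hδ : 0 < min (f (z + 1) - f z) (f z - f (z - 1)) :=
      lt_min (sub_pos.2 (hf (by omega))) (sub_pos.2 (hf (by omega)))
    filter_upwards [(Metric.tendsto_nhds.1 hstep) _ hδ] with n hn hxn
    rw [Real.dist_eq, sub_zero] at hn
    rcases hx n with h | h <;> rw [h, hxn] at hn
    · exact (min_le_left _ _).not_gt ((le_abs_self _).trans_lt hn)
    · rw [abs_sub_comm] at hn
      exact (min_le_right _ _).not_gt ((le_abs_self _).trans_lt hn)
  refine fun s hs => mem_map.2 ?_
  filter_upwards [(eventually_all_finite (mem_cofinite.1 hs)).2 fun z _ => havoid z] with n hn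
  by_contra hns
  exact hn (x n) hns rfl

end IsNearestNeighbourPath

/-- The function vanishing at `0` whose increments `F (z + 1) - F z` are `g z`. -/
noncomputable def discretePrimitive (g : ℤ → ℝ) (z : ℤ) : ℝ :=
  ∑ x ∈ Ico 0 z, g x - ∑ x ∈ Ico z 0, g x

namespace discretePrimitive

variable {g : ℤ → ℝ}

@[simp] lemma zero : discretePrimitive g 0 = 0 := by simp [discretePrimitive]

lemma add_one (z : ℤ) : discretePrimitive g (z + 1) = discretePrimitive g z + g z := by
  unfold discretePrimitive
  rcases le_or_gt 0 z with hz | hz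
  · rw [Ico_eq_empty_of_le (by omega : (0 : ℤ) ≤ z + 1), Ico_eq_empty_of_le hz,
      ← insert_Ico_right_eq_Ico_add_one hz, sum_insert (by simp)]
    ring
  · rw [Ico_eq_empty_of_le (by omega : z + 1 ≤ 0), Ico_eq_empty_of_le hz.le,
      ← insert_Ico_add_one_left_eq_Ico hz, sum_insert (by simp)]
    ring

lemma sub_one (z : ℤ) : discretePrimitive g (z - 1) = discretePrimitive g z - g (z - 1) := by
  rw [eq_sub_iff_add_eq, ← add_one, sub_add_cancel]

lemma natCast (n : ℕ) : discretePrimitive g n = ∑ i ∈ range n, g i := by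
  induction n with
  | zero => simp
  | succ n ih => push_cast; rw [add_one, ih, sum_range_succ]

lemma comp_neg_sub_one (z : ℤ) :
    discretePrimitive (fun x => g (-x - 1)) z = -discretePrimitive g (-z) := by
  induction z using Int.induction_on with
  | zero => simp
  | succ n ih => rw [add_one, ih, neg_add, ← sub_eq_add_neg, sub_one]; ring
  | pred n ih =>
    rw [sub_one, ih, show -(-(n : ℤ) - 1) = n + 1 by ring, add_one]
    simp only [neg_neg, add_sub_cancel_right]
    ring

lemma strictMono (hg : ∀ z, 0 < g z) : StrictMono (discretePrimitive g) :=
  strictMono_int_of_lt_succ fun z => by rw [add_one]; linarith [hg z]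

lemma bddAbove_range_iff (hg : ∀ z, 0 ≤ g z) :
    BddAbove (Set.range (discretePrimitive g)) ↔ Summable fun n : ℕ => g n := by
  have hmono : Monotone (discretePrimitive g) :=
    monotone_int_of_le_succ fun z => by rw [add_one]; linarith [hg z]
  constructor
  · rintro ⟨c, hc⟩
    exact summable_of_sum_range_le (fun n => hg n) fun n => natCast (g := g) n ▸ hc ⟨n, rfl⟩
  · intro h
    refine ⟨∑' n : ℕ, g n, ?_⟩
    rintro _ ⟨z, rfl⟩
    calc discretePrimitive g z ≤ discretePrimitive g z.toNat := hmono (Int.self_le_toNat z)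
      _ ≤ ∑' n : ℕ, g n := natCast (g := g) _ ▸ h.sum_le_tsum _ fun n _ => hg n

lemma bddBelow_range_iff (hg : ∀ z, 0 ≤ g z) :
    BddBelow (Set.range (discretePrimitive g)) ↔ Summable fun n : ℕ => g (-n - 1) := by
  rw [← bddAbove_range_iff fun z => hg (-z - 1), ← bddBelow_neg]
  congr!
  ext y
  simp only [Set.mem_neg, Set.mem_range, comp_neg_sub_one, neg_inj]
  exact (Equiv.neg ℤ).surjective.exists

end discretePrimitive

/-- The resistance `1 / c_{z, z+1}` of the edge `{z, z + 1}` in the electrical network of the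
walk; one of the two products is empty. -/
noncomputable def resistance (w : ℤ → ℝ) (z : ℤ) : ℝ :=
  (∏ x ∈ Icc 1 z, (1 - w x) / w x) / ∏ x ∈ Icc (z + 1) 0, (1 - w x) / w x

noncomputable def scale (w : ℤ → ℝ) : ℤ → ℝ := discretePrimitive (resistance w)

section Environment

variable {w : ℤ → ℝ}

lemma prod_one_sub_div_pos (hw : ∀ x, w x ∈ Set.Ioo (0 : ℝ) 1) (s : Finset ℤ) :
    0 < ∏ x ∈ s, (1 - w x) / w x :=
  prod_pos fun x _ => div_pos (by linarith [(hw x).2]) (hw x).1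

lemma resistance_pos (hw : ∀ x, w x ∈ Set.Ioo (0 : ℝ) 1) (z : ℤ) : 0 < resistance w z :=
  div_pos (prod_one_sub_div_pos hw _) (prod_one_sub_div_pos hw _)

lemma mul_resistance (hw : ∀ x, w x ∈ Set.Ioo (0 : ℝ) 1) (z : ℤ) :
    w z * resistance w z = (1 - w z) * resistance w (z - 1) := by
  have hw0 := (hw z).1.ne'
  have hw1 : 1 - w z ≠ 0 := by linarith [(hw z).2]
  unfold resistance
  rcases le_or_gt 1 z with hz | hz
  · rw [Icc_eq_empty_of_lt (by omega : (0 : ℤ) < z + 1),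
      Icc_eq_empty_of_lt (by omega : (0 : ℤ) < z - 1 + 1),
      ← insert_Icc_sub_one_right_eq_Icc hz, prod_insert (by simp)]
    field_simp
  · rw [Icc_eq_empty_of_lt hz, Icc_eq_empty_of_lt (by omega : z - 1 < 1), sub_add_cancel,
      ← insert_Icc_add_one_left_eq_Icc (by omega : z ≤ 0), prod_insert (by simp)]
    have hP := (prod_one_sub_div_pos hw (Icc (z + 1) 0)).ne'
    field_simp

lemma scale_eq_mul_add_mul (hw : ∀ x, w x ∈ Set.Ioo (0 : ℝ) 1) (z : ℤ) :
    scale w z = w z * scale w (z + 1) + (1 - w z) * scale w (z - 1) := by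
  rw [scale, discretePrimitive.add_one, discretePrimitive.sub_one]
  linear_combination -mul_resistance hw z

lemma resistance_natCast_add_one (n : ℕ) :
    resistance w (n + 1) = ∏ x ∈ Icc (1 : ℤ) (n + 1), (1 - w x) / w x := by
  rw [resistance, Icc_eq_empty_of_lt (by omega : (0 : ℤ) < n + 1 + 1), prod_empty, div_one]

lemma resistance_neg_natCast_sub_one (n : ℕ) :
    resistance w (-n - 1) = ∏ x ∈ Icc (-(n : ℤ)) 0, w x / (1 - w x) := by
  rw [resistance, Icc_eq_empty_of_lt (by omega : -(n : ℤ) - 1 < 1), prod_empty, sub_add_cancel,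
    one_div, ← prod_inv_distrib]
  simp only [inv_div]

end Environment

section Martingale

variable {Ω : Type*} {m : MeasurableSpace Ω} {μ : Measure Ω} {F : Filtration ℕ m}

lemma integrable_comp_of_forall_mem [IsFiniteMeasure μ] {Y : Ω → ℤ} (hY : Measurable Y)
    {s : Finset ℤ} (hs : ∀ ω, Y ω ∈ s) (v : ℤ → ℝ) : Integrable (fun ω => v (Y ω)) μ :=
  .of_bound (measurable_from_top.comp hY).aestronglyMeasurable (∑ z ∈ s, ‖v z‖)
    (.of_forall fun ω => single_le_sum (fun z _ => norm_nonneg (v z)) (hs ω))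

theorem martingale_comp_of_eq_mul_add_mul [IsFiniteMeasure μ] {w f : ℤ → ℝ}
    (hf : ∀ z, f z = w z * f (z + 1) + (1 - w z) * f (z - 1))
    {X : ℕ → Ω → ℤ} (hadX : StronglyAdapted F X) (hX0 : ∀ ω, X 0 ω = 0)
    (hX : ∀ ω, IsNearestNeighbourPath (X · ω))
    (hcond : ∀ n, μ[{ω | X (n + 1) ω = X n ω + 1}.indicator (fun _ => (1 : ℝ)) | F n]
      =ᵐ[μ] fun ω => w (X n ω)) :
    Martingale (fun n ω => f (X n ω)) F μ := by
  have hmeas (v : ℤ → ℝ) (n : ℕ) : StronglyMeasurable[F n] fun ω => v (X n ω) :=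
    (continuous_of_discreteTopology (f := v)).comp_stronglyMeasurable (hadX n)
  have hX' (k : ℕ) : Measurable (X k) := (hadX k).measurable.mono (F.le k) le_rfl
  have hint (v : ℤ → ℝ) (n : ℕ) : Integrable (fun ω => v (X n ω)) μ :=
    integrable_comp_of_forall_mem (hX' n)
      (fun ω => mem_Icc.2 (abs_le.1 ((hX ω).abs_apply_le (hX0 ω) n))) v
  refine martingale_nat (fun n => hmeas f n) (fun n => hint f n) fun n => ?_
  set A := {ω | X (n + 1) ω = X n ω + 1}
  have hA : MeasurableSet A := measurableSet_eq_fun (hX' (n + 1)) ((hX' n).add_const 1)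
  set a : Ω → ℝ := fun ω => f (X n ω - 1)
  set b : Ω → ℝ := fun ω => f (X n ω + 1) - f (X n ω - 1)
  have ha : StronglyMeasurable[F n] a := hmeas (fun z => f (z - 1)) n
  have haint : Integrable a μ := hint (fun z => f (z - 1)) n
  have hb : StronglyMeasurable[F n] b := hmeas (fun z => f (z + 1) - f (z - 1)) n
  have hind : Integrable (A.indicator fun _ => (1 : ℝ)) μ := (integrable_const 1).indicator hA
  have hbA : Integrable (b * A.indicator fun _ => (1 : ℝ)) μ :=
    ((hint (fun z => f (z + 1) - f (z - 1)) n).indicator hA).congr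
      (.of_forall fun ω => by by_cases hω : ω ∈ A <;> simp [hω, b])
  have hnext : (fun ω => f (X (n + 1) ω)) = a + b * A.indicator fun _ => (1 : ℝ) := by
    ext ω
    by_cases hω : ω ∈ A
    · simp [hω, a, b, show X (n + 1) ω = X n ω + 1 from hω]
    · have : X (n + 1) ω = X n ω - 1 := (hX ω n).resolve_left hω
      simp [hω, a, this]
  calc (fun ω => f (X n ω)) = a + b * fun ω => w (X n ω) := by
        ext ω
        simp only [Pi.add_apply, Pi.mul_apply, a, b]
        linear_combination hf (X n ω)
    _ =ᵐ[μ] a + b * μ[A.indicator fun _ => (1 : ℝ) | F n] :=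
        EventuallyEq.rfl.add (EventuallyEq.rfl.mul (hcond n).symm)
    _ =ᵐ[μ] μ[a | F n] + μ[b * A.indicator fun _ => (1 : ℝ) | F n] := by
        rw [condExp_of_stronglyMeasurable (F.le n) ha haint]
        exact EventuallyEq.rfl.add (condExp_mul_of_stronglyMeasurable_left hb hbA hind).symm
    _ =ᵐ[μ] μ[fun ω => f (X (n + 1) ω) | F n] := by
        rw [hnext]
        exact (condExp_add haint hbA _).symm

theorem MeasureTheory.Submartingale.exists_ae_tendsto_of_le [IsFiniteMeasure μ]
    {f : ℕ → Ω → ℝ} (hf : Submartingale f F μ) {c : ℝ} (hc : ∀ n ω, f n ω ≤ c) :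
    ∀ᵐ ω ∂μ, ∃ r, Tendsto (fun n => f n ω) atTop (𝓝 r) := by
  refine hf.exists_ae_tendsto_of_bdd (R := (2 * |c| * μ.real Set.univ - ∫ ω, f 0 ω ∂μ).toNNReal)
    fun n => ?_
  rw [eLpNorm_one_eq_lintegral_enorm, ← ofReal_integral_norm_eq_lintegral_enorm (hf.integrable n)]
  refine ENNReal.ofReal_le_ofReal ?_
  have habs (ω : Ω) : ‖f n ω‖ ≤ 2 * |c| - f n ω := by
    rw [Real.norm_eq_abs, abs_le]
    constructor <;> linarith [hc n ω, le_abs_self c, neg_abs_le c]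
  calc ∫ ω, ‖f n ω‖ ∂μ ≤ ∫ ω, 2 * |c| - f n ω ∂μ :=
        integral_mono (hf.integrable n).norm ((integrable_const _).sub (hf.integrable n)) habs
    _ = 2 * |c| * μ.real Set.univ - ∫ ω, f n ω ∂μ := by
        rw [integral_sub (integrable_const _) (hf.integrable n), integral_const, smul_eq_mul,
          mul_comm]
    _ ≤ 2 * |c| * μ.real Set.univ - ∫ ω, f 0 ω ∂μ := by
        have := hf.setIntegral_le (Nat.zero_le n) MeasurableSet.univ
        rw [setIntegral_univ, setIntegral_univ] at this
        linarith

/-- The transform of `M` by the indicators of `D n` is `M` stopped on leaving the `D n`, hence a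
submartingale bounded above by `max c 0`. -/
theorem MeasureTheory.Submartingale.exists_ae_tendsto_of_le_on [IsFiniteMeasure μ]
    {M : ℕ → Ω → ℝ} (hM : Submartingale M F μ) {D : ℕ → Set Ω}
    (hD : ∀ n, MeasurableSet[F n] (D n)) (hanti : Antitone D) {c : ℝ}
    (hc : ∀ n, ∀ ω ∈ D n, M (n + 1) ω - M 0 ω ≤ c) :
    ∀ᵐ ω ∂μ, (∀ n, ω ∈ D n) → ∃ r, Tendsto (fun n => M n ω) atTop (𝓝 r) := by
  set Z : ℕ → Ω → ℝ := fun n => ∑ k ∈ range n, (D k).indicator (fun _ => 1) * (M (k + 1) - M k)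
  have hZ : Submartingale Z F μ :=
    hM.sum_mul_sub (fun n => stronglyMeasurable_const.indicator (hD n)) (R := 1)
      (fun n ω => Set.indicator_le_self' (fun _ _ => zero_le_one) ω)
      (fun n ω => Set.indicator_nonneg (fun _ _ => zero_le_one) ω)
  have hZ_succ (n : ℕ) (ω : Ω) :
      Z (n + 1) ω = Z n ω + (D n).indicator (fun _ => 1) ω * (M (n + 1) ω - M n ω) := by
    simp [Z, sum_range_succ]
  have hZ_eq (n : ℕ) (ω : Ω) (hω : ω ∈ D n) : Z n ω = M n ω - M 0 ω := by
    induction n with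
    | zero => simp [Z]
    | succ n ih =>
      have hωn : ω ∈ D n := hanti n.le_succ hω
      rw [hZ_succ, Set.indicator_of_mem hωn, ih hωn]
      ring
  have hZ_le (n : ℕ) (ω : Ω) : Z n ω ≤ max c 0 := by
    induction n with
    | zero => simp [Z]
    | succ n ih =>
      by_cases hωn : ω ∈ D n
      · rw [hZ_succ, Set.indicator_of_mem hωn, hZ_eq n ω hωn]
        linarith [hc n ω hωn, le_max_left c 0]
      · rw [hZ_succ, Set.indicator_of_notMem hωn]
        simpa using ih
  filter_upwards [hZ.exists_ae_tendsto_of_le hZ_le] with ω ⟨r, hr⟩ hω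
  exact ⟨r + M 0 ω, (hr.add_const (M 0 ω)).congr fun n => by rw [hZ_eq n ω (hω n)]; ring⟩

section Walk

variable {f : ℤ → ℝ} {X : ℕ → Ω → ℤ}

theorem ae_tendsto_cofinite_of_bddAbove [IsFiniteMeasure μ] (hf : StrictMono f)
    (hbdd : BddAbove (Set.range f)) (hX : ∀ ω, IsNearestNeighbourPath (X · ω))
    (hM : Submartingale (fun n ω => f (X n ω)) F μ) :
    ∀ᵐ ω ∂μ, Tendsto (X · ω) atTop cofinite := by
  obtain ⟨c, hc⟩ := hbdd
  filter_upwards [hM.exists_ae_tendsto_of_le fun n ω => hc ⟨X n ω, rfl⟩] with ω ⟨r, hr⟩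
  exact (hX ω).tendsto_cofinite_of_tendsto_comp hf hr

theorem ae_forall_exists_lt_of_not_bddBelow [IsFiniteMeasure μ] (hf : StrictMono f)
    (hbdd : ¬BddBelow (Set.range f)) (hadX : StronglyAdapted F X) (hX0 : ∀ ω, X 0 ω = 0)
    (hX : ∀ ω, IsNearestNeighbourPath (X · ω))
    (hM : Submartingale (fun n ω => f (X n ω)) F μ) :
    ∀ᵐ ω ∂μ, ∀ b, ∃ n, b < X n ω := by
  have hbot : Tendsto f atBot atBot := tendsto_atBot_atBot_of_monotone hf.monotone fun b => by
    obtain ⟨_, ⟨z, rfl⟩, hz⟩ := not_bddBelow_iff.1 hbdd b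
    exact ⟨z, hz.le⟩
  refine ae_all_iff.2 fun b => ?_
  set D : ℕ → Set Ω := fun n => {ω | ∀ j ≤ n, X j ω ≤ b}
  have hD (n : ℕ) : MeasurableSet[F n] (D n) := by
    simp only [D, Set.ofPred_forall]
    exact .iInter fun j => .iInter fun hj => F.mono hj _ ((hadX j).measurable measurableSet_Iic)
  have hanti : Antitone D := fun n n' hnn' ω hω j hj => hω j (hj.trans hnn')
  have hc : ∀ n, ∀ ω ∈ D n, f (X (n + 1) ω) - f (X 0 ω) ≤ f (b + 1) - f 0 := by
    intro n ω hω
    have := hω n le_rfl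
    rw [hX0]
    gcongr
    exact hf.monotone (by rcases hX ω n with h | h <;> dsimp only at h <;> omega)
  filter_upwards [hM.exists_ae_tendsto_of_le_on hD hanti hc] with ω hω
  by_contra! hle
  obtain ⟨r, hr⟩ := hω fun n j _ => hle j
  have hcof := (hX ω).tendsto_cofinite_of_tendsto_comp hf hr
  have hXbot : Tendsto (X · ω) atTop atBot := tendsto_atBot.2 fun a =>
    (hcof.eventually (Set.finite_Icc a b).compl_mem_cofinite).mono fun n hn => by
      simp only [Set.mem_Icc, not_and, not_le] at hn
      by_contra! ha
      exact (hn ha.le).not_ge (hle n)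
  exact not_tendsto_nhds_of_tendsto_atBot (hbot.comp hXbot) r hr

theorem ae_infinite_setOf_eq_zero_iff [IsProbabilityMeasure μ] (hf : StrictMono f)
    (hadX : StronglyAdapted F X) (hX0 : ∀ ω, X 0 ω = 0)
    (hX : ∀ ω, IsNearestNeighbourPath (X · ω)) (hM : Martingale (fun n ω => f (X n ω)) F μ) :
    (∀ᵐ ω ∂μ, {n | X n ω = 0}.Infinite) ↔ ¬BddAbove (Set.range f) ∧ ¬BddBelow (Set.range f) := by
  set f' : ℤ → ℝ := fun z => -f (-z)
  have hf' : StrictMono f' := fun a b h => neg_lt_neg (hf (neg_lt_neg h))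
  have hrange : Set.range f' = -Set.range f := by
    ext y
    simp only [f', Set.mem_neg, Set.mem_range, ← neg_eq_iff_eq_neg]
    exact ((Equiv.neg ℤ).surjective.exists (p := fun z => -f z = y)).symm
  have hadX' : StronglyAdapted F fun n ω => -X n ω := fun n => (hadX n).neg
  have hX' (ω : Ω) : IsNearestNeighbourPath fun n => -X n ω := (hX ω).neg
  have hM' : Submartingale (fun n ω => f' (-X n ω)) F μ := by
    have hneg : (fun n ω => f' (-X n ω)) = -fun n ω => f (X n ω) := by
      ext n ω
      simp [f']
    rw [hneg]
    exact hM.neg.submartingale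
  have hfinite {x : ℕ → ℤ} (hx : Tendsto x atTop cofinite) : {n | x n = 0}.Finite := by
    rw [← Nat.cofinite_eq_atTop] at hx
    simpa using eventually_cofinite.1 (hx.eventually (Set.finite_singleton 0).compl_mem_cofinite)
  constructor
  · intro hrec
    refine ⟨fun hbdd => ?_, fun hbdd => ?_⟩
    · obtain ⟨ω, hinf, hcof⟩ :=
        (hrec.and (ae_tendsto_cofinite_of_bddAbove hf hbdd hX hM.submartingale)).exists
      exact hinf (hfinite hcof)
    · rw [← bddAbove_neg, ← hrange] at hbdd
      obtain ⟨ω, hinf, hcof⟩ := (hrec.and (ae_tendsto_cofinite_of_bddAbove hf' hbdd hX' hM')).exists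
      exact hinf (by simpa using hfinite hcof)
  · rintro ⟨hup, hdown⟩
    rw [← bddBelow_neg, ← hrange] at hup
    filter_upwards [ae_forall_exists_lt_of_not_bddBelow hf hdown hadX hX0 hX hM.submartingale,
      ae_forall_exists_lt_of_not_bddBelow hf' hup hadX' (by simpa using hX0) hX' hM']
      with ω hup' hdown'
    refine (hX ω).infinite_setOf_eq_zero (hX0 ω) hup' fun b => ?_
    obtain ⟨n, hn⟩ := hdown' (-b)
    exact ⟨n, by omega⟩

end Walk

end Martingale

/-- A nearest-neighbor random walk on `ℤ` in a fixed environment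
`(w_x)`, stepping right from `x` with probability `w x ∈ (0,1)`, is recurrent
(visits `0` infinitely often a.s.) if and only if both series
`∑_{z ≥ 1} ∏_{x=1}^{z} (1-w_x)/w_x` and `∑_{z ≤ 0} ∏_{x=z}^{0} w_x/(1-w_x)`
diverge. -/
theorem rwre_recurrence_criterion
    (w : ℤ → ℝ) (hw : ∀ x, w x ∈ Set.Ioo (0 : ℝ) 1)
    {Ω : Type*} [m : MeasurableSpace Ω] (μ : Measure Ω) [IsProbabilityMeasure μ]
    (F : Filtration ℕ m) (X : ℕ → Ω → ℤ) (hadX : StronglyAdapted F X)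
    (hX0 : X 0 = fun _ => 0)
    (hstep : ∀ n ω, X (n + 1) ω = X n ω + 1 ∨ X (n + 1) ω = X n ω - 1)
    (hcond : ∀ n,
      μ[Set.indicator {ω | X (n + 1) ω = X n ω + 1} (fun _ => (1 : ℝ)) | F n]
        =ᵐ[μ] fun ω => w (X n ω)) :
    (∀ᵐ ω ∂μ, {n : ℕ | X n ω = 0}.Infinite) ↔
      (¬ Summable (fun z : ℕ =>
          ∏ x ∈ Finset.Icc (1 : ℤ) ((z : ℤ) + 1), (1 - w x) / w x) ∧
       ¬ Summable (fun z : ℕ =>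
          ∏ x ∈ Finset.Icc (-(z : ℤ)) 0, w x / (1 - w x))) := by
  have hX (ω : Ω) : IsNearestNeighbourPath (X · ω) := fun n => hstep n ω
  have hX0' (ω : Ω) : X 0 ω = 0 := congrFun hX0 ω
  have hM := martingale_comp_of_eq_mul_add_mul (scale_eq_mul_add_mul hw) hadX hX0' hX hcond
  have hr (z : ℤ) := (resistance_pos hw z).le
  rw [ae_infinite_setOf_eq_zero_iff (discretePrimitive.strictMono (resistance_pos hw)) hadX hX0'
      hX hM, discretePrimitive.bddAbove_range_iff hr,
    discretePrimitive.bddBelow_range_iff hr, ← summable_nat_add_iff 1]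
  simp only [Nat.cast_add, Nat.cast_one, resistance_natCast_add_one,
    resistance_neg_natCast_sub_one]
end
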